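/- arXiv:2007.12922 — 4 statements merged into one kernel-verified Lean document; each statement's English description precedes it below -/
import Mathlib

section
/- (Lemma S-(A4.2c).) Let D* be a 𝒢-measurable ℝ^p-valued random variable with the required integrability. Define Γ* = T⁻¹·( D* − (T*)⁻¹·E[T⁻¹·D*] ). Then: (i) Γ* is 𝒢-measurable with E[Γ*] = 0, so Γ*·W·ε ∈ Λ̃⁽²⁾; (ii) D*·T⁻¹·W·ε − Γ*·W·ε = E[D*·T⁻¹]·(T*·T)⁻¹·W·ε, and this element is orthogonal to every element of Λ̃⁽²⁾. Consequently, the orthogonal projection of D*·T⁻¹·W·ε onto the orthogonal complement of Λ̃⁽²⁾ equals E[D*·T⁻¹]·(T*·T)⁻¹·W·ε. In particular, taking D* = c·T with c ∈ ℝ^p a constant vector, the projection of c·W·ε onto Λ̃⁽²⁾^⊥ is c·(T*·T)⁻¹·W·ε. -/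
/-!
Since `E[ε² | ℋ] = W⁻¹`, one has `E[(Wε)² | ℋ] = W`, hence `E[(Wε)² | 𝒢] = T` by the tower
property. For `𝒢`-measurable `a` and `Γ` the integral `E[a W ε ⟨v, W ε Γ⟩]` therefore collapses to
`E[a T ⟨v, Γ⟩]`; for `a = (T* T)⁻¹` this is `(T*)⁻¹ ⟨v, E[Γ]⟩`, which vanishes on `Λ̃⁽²⁾`. The
residual identity is pointwise algebra, and `Γ*` is centred because `T* = E[T⁻¹]`.

`Γ*` is only square integrable, so `Γ* W ε ∈ L²` needs the bound `E[(Wε)² | ℋ] = W ≤ c₁⁻¹`: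
for `ℋ`-measurable `ψ ≥ 0`, `E[ψ (Wε)²] = E[ψ E[(Wε)² | ℋ]] ≤ c₁⁻¹ E[ψ]`.
-/

open MeasureTheory
open scoped RealInnerProductSpace ENNReal

section CondExp

variable {Ω : Type*} {m mΩ : MeasurableSpace Ω} {P : Measure Ω}

theorem lintegral_mul_ofReal_le_of_condExp_le [IsFiniteMeasure P] (hm : m ≤ mΩ)
    {φ : Ω → ℝ} (hφ : Integrable φ P) (hφ0 : 0 ≤ᵐ[P] φ) {C : ℝ}
    (hC : P[φ|m] ≤ᵐ[P] fun _ => C) {ψ : Ω → ℝ≥0∞} (hψ : Measurable[m] ψ) :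
    ∫⁻ ω, ψ ω * ENNReal.ofReal (φ ω) ∂P ≤ ENNReal.ofReal C * ∫⁻ ω, ψ ω ∂P := by
  have := isFiniteMeasure_trim (μ := P) hm
  have hdensity : (P.withDensity fun ω => ENNReal.ofReal (φ ω)).trim hm ≤
      ENNReal.ofReal C • P.trim hm := by
    refine Measure.le_iff.mpr fun s hs => ?_
    rw [trim_measurableSet_eq hm hs, Measure.smul_apply, trim_measurableSet_eq hm hs,
      withDensity_apply _ (hm s hs), smul_eq_mul,
      ← ofReal_integral_eq_lintegral_ofReal hφ.restrict (ae_restrict_of_ae hφ0),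
      ← setIntegral_condExp hm hφ hs, ← ofReal_measureReal,
      ← ENNReal.ofReal_mul' measureReal_nonneg]
    refine ENNReal.ofReal_le_ofReal ?_
    calc ∫ ω in s, P[φ|m] ω ∂P ≤ ∫ _ in s, C ∂P :=
          setIntegral_mono_ae integrable_condExp.integrableOn (integrable_const C).integrableOn hC
      _ = C * P.real s := by rw [setIntegral_const, smul_eq_mul, mul_comm]
  calc ∫⁻ ω, ψ ω * ENNReal.ofReal (φ ω) ∂P
      = ∫⁻ ω, ψ ω ∂(P.withDensity fun ω => ENNReal.ofReal (φ ω)) := by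
        rw [lintegral_withDensity_eq_lintegral_mul₀ hφ.1.aemeasurable.ennreal_ofReal
          (hψ.mono hm le_rfl).aemeasurable]
        simp only [Pi.mul_apply, mul_comm]
    _ = ∫⁻ ω, ψ ω ∂(P.withDensity fun ω => ENNReal.ofReal (φ ω)).trim hm :=
        (lintegral_trim hm hψ).symm
    _ ≤ ∫⁻ ω, ψ ω ∂(ENNReal.ofReal C • P.trim hm) := lintegral_mono' hdensity le_rfl
    _ = ENNReal.ofReal C * ∫⁻ ω, ψ ω ∂P := by
        rw [lintegral_smul_measure, lintegral_trim hm hψ, smul_eq_mul]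

theorem integrable_mul_of_condExp_le [IsFiniteMeasure P] (hm : m ≤ mΩ)
    {φ : Ω → ℝ} (hφ : Integrable φ P) (hφ0 : 0 ≤ᵐ[P] φ) {C : ℝ}
    (hC : P[φ|m] ≤ᵐ[P] fun _ => C) {ψ : Ω → ℝ} (hψm : StronglyMeasurable[m] ψ)
    (hψ : Integrable ψ P) :
    Integrable (fun ω => ψ ω * φ ω) P := by
  refine ⟨(hψm.mono hm).aestronglyMeasurable.mul hφ.1, ?_⟩
  have hnorm : ∀ᵐ ω ∂P, ‖ψ ω * φ ω‖ₑ = ‖ψ ω‖ₑ * ENNReal.ofReal (φ ω) := by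
    filter_upwards [hφ0] with ω hω
    rw [enorm_mul, Real.enorm_of_nonneg hω]
  calc ∫⁻ ω, ‖ψ ω * φ ω‖ₑ ∂P = ∫⁻ ω, ‖ψ ω‖ₑ * ENNReal.ofReal (φ ω) ∂P := lintegral_congr_ae hnorm
    _ ≤ ENNReal.ofReal C * ∫⁻ ω, ‖ψ ω‖ₑ ∂P :=
        lintegral_mul_ofReal_le_of_condExp_le hm hφ hφ0 hC (measurable_enorm.comp hψm.measurable)
    _ < ∞ := ENNReal.mul_lt_top ENNReal.ofReal_lt_top hψ.2

theorem integral_mul_condExp (hm : m ≤ mΩ) [SigmaFinite (P.trim hm)] {f g : Ω → ℝ}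
    (hf : StronglyMeasurable[m] f) (hfg : Integrable (f * g) P) (hg : Integrable g P) :
    ∫ ω, f ω * g ω ∂P = ∫ ω, f ω * P[g|m] ω ∂P := by
  rw [← integral_condExp hm]
  exact integral_congr_ae (condExp_mul_of_stronglyMeasurable_left hf hfg hg)

theorem ae_mem_Icc_condExp [IsFiniteMeasure P] (hm : m ≤ mΩ) {f : Ω → ℝ} (hf : Integrable f P)
    {a b : ℝ} (hab : ∀ᵐ ω ∂P, f ω ∈ Set.Icc a b) :
    ∀ᵐ ω ∂P, P[f|m] ω ∈ Set.Icc a b := by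
  have hlow := condExp_mono (m := m) (integrable_const a) hf (hab.mono fun _ h => h.1)
  have hup := condExp_mono (m := m) hf (integrable_const b) (hab.mono fun _ h => h.2)
  rw [condExp_const hm] at hlow hup
  filter_upwards [hlow, hup] with ω h₁ h₂ using ⟨h₁, h₂⟩

end CondExp

theorem inv_mem_Icc_inv {a b x : ℝ} (ha : 0 < a) (hx : x ∈ Set.Icc a b) :
    x⁻¹ ∈ Set.Icc b⁻¹ a⁻¹ :=
  ⟨inv_anti₀ (ha.trans_le hx.1) hx.2, inv_anti₀ ha hx.1⟩

section Integrals

variable {Ω : Type*} {mΩ : MeasurableSpace Ω} {P : Measure Ω} {f : Ω → ℝ} {a b : ℝ}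

theorem le_of_ae_mem_Icc [NeZero P] (h : ∀ᵐ ω ∂P, f ω ∈ Set.Icc a b) : a ≤ b :=
  let ⟨_, hω⟩ := h.exists
  hω.1.trans hω.2

theorem memLp_top_of_ae_mem_Icc (hf : AEStronglyMeasurable f P) (ha : 0 ≤ a)
    (h : ∀ᵐ ω ∂P, f ω ∈ Set.Icc a b) : MemLp f ⊤ P :=
  memLp_top_of_bound hf b <| h.mono fun _ hω => by
    rw [Real.norm_of_nonneg (ha.trans hω.1)]
    exact hω.2

theorem integral_smul_sub_inv_integral_smul_eq_zero {E : Type*} [NormedAddCommGroup E]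
    [NormedSpace ℝ E] [CompleteSpace E] {D : Ω → E} (hf : Integrable f P)
    (hfD : Integrable (fun ω => f ω • D ω) P) (hf0 : ∫ ω, f ω ∂P ≠ 0) :
    ∫ ω, f ω • (D ω - (∫ ω', f ω' ∂P)⁻¹ • ∫ ω', f ω' • D ω' ∂P) ∂P = 0 := by
  simp_rw [smul_sub]
  rw [integral_sub hfD (hf.smul_const _), integral_smul_const, smul_inv_smul₀ hf0, sub_self]

theorem integral_one_sub_inv_integral_mul_smul_eq_zero [IsProbabilityMeasure P] {E : Type*}
    [NormedAddCommGroup E] [NormedSpace ℝ E] [CompleteSpace E] (hf : Integrable f P)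
    (hf0 : ∫ ω, f ω ∂P ≠ 0) (v : E) :
    ∫ ω, (1 - (∫ ω', f ω' ∂P)⁻¹ * f ω) • v ∂P = 0 := by
  rw [integral_smul_const, integral_sub (integrable_const 1) (hf.const_mul _), integral_const_mul,
    integral_const, inv_mul_cancel₀ hf0, probReal_univ, one_smul, sub_self, zero_smul]

end Integrals

def lambdaTilde2 {Ω E : Type*} {mΩ : MeasurableSpace Ω} [NormedAddCommGroup E] [NormedSpace ℝ E]
    (P : Measure Ω) (mG : MeasurableSpace Ω) (W ε : Ω → ℝ) : Set (Ω → E) :=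
  {g | ∃ Γ : Ω → E, StronglyMeasurable[mG] Γ ∧ Integrable Γ P ∧ ∫ ω, Γ ω ∂P = 0 ∧
    MemLp g 2 P ∧ g = fun ω => (W ω * ε ω) • Γ ω}

section Lambda2tilde

variable {Ω : Type*} {mΩ : MeasurableSpace Ω} {P : Measure Ω}
  {mG mH : MeasurableSpace Ω} {ε W T : Ω → ℝ} {c₁ c₂ : ℝ}

theorem stronglyMeasurable_W (hW : W = fun ω => (P[fun ω => ε ω ^ 2|mH] ω)⁻¹) :
    StronglyMeasurable[mH] W :=
  hW ▸ stronglyMeasurable_condExp.measurable.inv.stronglyMeasurable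

theorem ae_W_mem_Icc (hc₁ : 0 < c₁)
    (hvar : ∀ᵐ ω ∂P, P[fun ω => ε ω ^ 2|mH] ω ∈ Set.Icc c₁ c₂)
    (hW : W = fun ω => (P[fun ω => ε ω ^ 2|mH] ω)⁻¹) :
    ∀ᵐ ω ∂P, W ω ∈ Set.Icc c₂⁻¹ c₁⁻¹ := by
  subst hW
  filter_upwards [hvar] with ω hω using inv_mem_Icc_inv hc₁ hω

theorem memLp_top_W [NeZero P] (hHF : mH ≤ mΩ) (hc₁ : 0 < c₁)
    (hvar : ∀ᵐ ω ∂P, P[fun ω => ε ω ^ 2|mH] ω ∈ Set.Icc c₁ c₂)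
    (hW : W = fun ω => (P[fun ω => ε ω ^ 2|mH] ω)⁻¹) : MemLp W ⊤ P :=
  have hc₂ : 0 < c₂ := hc₁.trans_le (le_of_ae_mem_Icc hvar)
  memLp_top_of_ae_mem_Icc ((stronglyMeasurable_W hW).mono hHF).aestronglyMeasurable
    (inv_pos.2 hc₂).le (ae_W_mem_Icc hc₁ hvar hW)

theorem memLp_W_mul_ε [NeZero P] (hHF : mH ≤ mΩ) (hε : MemLp ε 2 P) (hc₁ : 0 < c₁)
    (hvar : ∀ᵐ ω ∂P, P[fun ω => ε ω ^ 2|mH] ω ∈ Set.Icc c₁ c₂)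
    (hW : W = fun ω => (P[fun ω => ε ω ^ 2|mH] ω)⁻¹) :
    MemLp (fun ω => W ω * ε ω) 2 P :=
  hε.mul (memLp_top_W hHF hc₁ hvar hW)

theorem condExp_sq_W_mul_ε_eq_W [NeZero P] (hHF : mH ≤ mΩ) (hε : MemLp ε 2 P) (hc₁ : 0 < c₁)
    (hvar : ∀ᵐ ω ∂P, P[fun ω => ε ω ^ 2|mH] ω ∈ Set.Icc c₁ c₂)
    (hW : W = fun ω => (P[fun ω => ε ω ^ 2|mH] ω)⁻¹) :
    P[fun ω => (W ω * ε ω) ^ 2|mH] =ᵐ[P] W := by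
  have hsplit : (fun ω => (W ω * ε ω) ^ 2) = (fun ω => W ω ^ 2) * fun ω => ε ω ^ 2 := by
    funext ω
    exact mul_pow _ _ _
  have hint := (memLp_W_mul_ε hHF hε hc₁ hvar hW).integrable_sq
  rw [hsplit] at hint ⊢
  filter_upwards [condExp_mul_of_stronglyMeasurable_left ((stronglyMeasurable_W hW).pow 2) hint
    hε.integrable_sq, hvar] with ω hω hX
  refine hω.trans ?_
  have : P[fun ω => ε ω ^ 2|mH] ω ≠ 0 := (hc₁.trans_le hX.1).ne'
  simp only [Pi.mul_apply, Pi.pow_apply, hW]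
  field_simp

theorem condExp_sq_W_mul_ε_eq_T [IsProbabilityMeasure P] (hGH : mG ≤ mH) (hHF : mH ≤ mΩ)
    (hε : MemLp ε 2 P) (hc₁ : 0 < c₁) (hvar : ∀ᵐ ω ∂P, P[fun ω => ε ω ^ 2|mH] ω ∈ Set.Icc c₁ c₂)
    (hW : W = fun ω => (P[fun ω => ε ω ^ 2|mH] ω)⁻¹) (hT : T = P[W|mG]) :
    P[fun ω => (W ω * ε ω) ^ 2|mG] =ᵐ[P] T := by
  have := isFiniteMeasure_trim (μ := P) hHF
  calc P[fun ω => (W ω * ε ω) ^ 2|mG]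
      =ᵐ[P] P[P[fun ω => (W ω * ε ω) ^ 2|mH]|mG] := (condExp_condExp_of_le hGH hHF).symm
    _ =ᵐ[P] P[W|mG] := condExp_congr_ae (condExp_sq_W_mul_ε_eq_W hHF hε hc₁ hvar hW)
    _ = T := hT.symm

theorem stronglyMeasurable_inv_T (hT : T = P[W|mG]) :
    StronglyMeasurable[mG] fun ω => (T ω)⁻¹ :=
  hT ▸ stronglyMeasurable_condExp.measurable.inv.stronglyMeasurable

theorem ae_inv_T_mem_Icc [IsProbabilityMeasure P] (hGH : mG ≤ mH) (hHF : mH ≤ mΩ)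
    (hc₁ : 0 < c₁) (hvar : ∀ᵐ ω ∂P, P[fun ω => ε ω ^ 2|mH] ω ∈ Set.Icc c₁ c₂)
    (hW : W = fun ω => (P[fun ω => ε ω ^ 2|mH] ω)⁻¹) (hT : T = P[W|mG]) :
    ∀ᵐ ω ∂P, (T ω)⁻¹ ∈ Set.Icc c₁ c₂ := by
  have hc₂ : 0 < c₂ := hc₁.trans_le (le_of_ae_mem_Icc hvar)
  have hTmem := ae_mem_Icc_condExp (hGH.trans hHF)
    ((memLp_top_W hHF hc₁ hvar hW).integrable le_top) (ae_W_mem_Icc hc₁ hvar hW)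
  filter_upwards [hTmem] with ω hω
  simpa only [hT, inv_inv] using inv_mem_Icc_inv (inv_pos.2 hc₂) hω

theorem memLp_top_inv_T [IsProbabilityMeasure P] (hGH : mG ≤ mH) (hHF : mH ≤ mΩ)
    (hc₁ : 0 < c₁) (hvar : ∀ᵐ ω ∂P, P[fun ω => ε ω ^ 2|mH] ω ∈ Set.Icc c₁ c₂)
    (hW : W = fun ω => (P[fun ω => ε ω ^ 2|mH] ω)⁻¹) (hT : T = P[W|mG]) :
    MemLp (fun ω => (T ω)⁻¹) ⊤ P :=
  memLp_top_of_ae_mem_Icc ((stronglyMeasurable_inv_T hT).mono (hGH.trans hHF)).aestronglyMeasurable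
    hc₁.le (ae_inv_T_mem_Icc hGH hHF hc₁ hvar hW hT)

theorem memLp_W_mul_ε_smul [IsProbabilityMeasure P] {E : Type*} [NormedAddCommGroup E]
    [NormedSpace ℝ E] (hGH : mG ≤ mH) (hHF : mH ≤ mΩ) (hε : MemLp ε 2 P) (hc₁ : 0 < c₁)
    (hvar : ∀ᵐ ω ∂P, P[fun ω => ε ω ^ 2|mH] ω ∈ Set.Icc c₁ c₂)
    (hW : W = fun ω => (P[fun ω => ε ω ^ 2|mH] ω)⁻¹) {Γ : Ω → E}
    (hΓm : StronglyMeasurable[mG] Γ) (hΓ : MemLp Γ 2 P) :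
    MemLp (fun ω => (W ω * ε ω) • Γ ω) 2 P := by
  have hWε := memLp_W_mul_ε hHF hε hc₁ hvar hW
  have hcondExp : P[fun ω => (W ω * ε ω) ^ 2|mH] ≤ᵐ[P] fun _ => c₁⁻¹ := by
    filter_upwards [condExp_sq_W_mul_ε_eq_W hHF hε hc₁ hvar hW, ae_W_mem_Icc hc₁ hvar hW]
      with ω hω hWω
    exact hω.trans_le hWω.2
  have hprod := integrable_mul_of_condExp_le hHF hWε.integrable_sq
    (ae_of_all _ fun _ => sq_nonneg _) hcondExp ((hΓm.mono hGH).norm.pow 2)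
    ((memLp_two_iff_integrable_sq_norm hΓ.1).1 hΓ)
  refine (memLp_two_iff_integrable_sq_norm
    (hWε.1.smul (hΓm.mono (hGH.trans hHF)).aestronglyMeasurable)).2 ?_
  refine hprod.congr (ae_of_all _ fun ω => ?_)
  show ‖Γ ω‖ ^ 2 * (W ω * ε ω) ^ 2 = ‖(W ω * ε ω) • Γ ω‖ ^ 2
  rw [norm_smul, mul_pow (‖_‖), Real.norm_eq_abs, sq_abs, mul_comm]

theorem integral_inv_T_pos [IsProbabilityMeasure P] (hGH : mG ≤ mH) (hHF : mH ≤ mΩ)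
    (hc₁ : 0 < c₁) (hvar : ∀ᵐ ω ∂P, P[fun ω => ε ω ^ 2|mH] ω ∈ Set.Icc c₁ c₂)
    (hW : W = fun ω => (P[fun ω => ε ω ^ 2|mH] ω)⁻¹) (hT : T = P[W|mG]) :
    0 < ∫ ω, (T ω)⁻¹ ∂P :=
  hc₁.trans_le <| by
    simpa using integral_mono_ae (integrable_const c₁)
      ((memLp_top_inv_T hGH hHF hc₁ hvar hW hT).integrable le_top)
      ((ae_inv_T_mem_Icc hGH hHF hc₁ hvar hW hT).mono fun _ h => h.1)

theorem integral_inner_smul_W_mul_ε [IsProbabilityMeasure P] {E : Type*} [NormedAddCommGroup E]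
    [InnerProductSpace ℝ E] (hGH : mG ≤ mH) (hHF : mH ≤ mΩ) (hε : MemLp ε 2 P) (hc₁ : 0 < c₁)
    (hvar : ∀ᵐ ω ∂P, P[fun ω => ε ω ^ 2|mH] ω ∈ Set.Icc c₁ c₂)
    (hW : W = fun ω => (P[fun ω => ε ω ^ 2|mH] ω)⁻¹) (hT : T = P[W|mG]) {a : Ω → ℝ}
    (ham : StronglyMeasurable[mG] a) (ha : MemLp a ⊤ P) (v : E) {Γ : Ω → E}
    (hΓm : StronglyMeasurable[mG] Γ) (hWεΓ : MemLp (fun ω => (W ω * ε ω) • Γ ω) 2 P) :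
    ∫ ω, ⟪(a ω * (W ω * ε ω)) • v, (W ω * ε ω) • Γ ω⟫ ∂P = ∫ ω, a ω * ⟪v, Γ ω⟫ * T ω ∂P := by
  have hWε := memLp_W_mul_ε hHF hε hc₁ hvar hW
  set φ : Ω → ℝ := fun ω => a ω * ⟪v, Γ ω⟫
  have hφm : StronglyMeasurable[mG] φ := ham.mul (stronglyMeasurable_const.inner hΓm)
  have hpoint : ∀ ω, ⟪(a ω * (W ω * ε ω)) • v, (W ω * ε ω) • Γ ω⟫ =
      φ ω * (W ω * ε ω) ^ 2 := fun ω => by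
    rw [real_inner_smul_left, real_inner_smul_right]
    ring
  have hint : Integrable (φ * fun ω => (W ω * ε ω) ^ 2) P := by
    refine ((hWε.integrable_mul (hWεΓ.const_inner v)).smul_of_top_right ha).congr
      (ae_of_all _ fun ω => ?_)
    simp only [Pi.mul_apply, smul_eq_mul, φ, real_inner_smul_right]
    ring
  have := isFiniteMeasure_trim (μ := P) (hGH.trans hHF)
  calc ∫ ω, ⟪(a ω * (W ω * ε ω)) • v, (W ω * ε ω) • Γ ω⟫ ∂P
      = ∫ ω, φ ω * (W ω * ε ω) ^ 2 ∂P := integral_congr_ae (ae_of_all _ hpoint)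
    _ = ∫ ω, φ ω * P[fun ω => (W ω * ε ω) ^ 2|mG] ω ∂P :=
        integral_mul_condExp (hGH.trans hHF) hφm hint hWε.integrable_sq
    _ = ∫ ω, φ ω * T ω ∂P := integral_congr_ae <| by
        filter_upwards [condExp_sq_W_mul_ε_eq_T hGH hHF hε hc₁ hvar hW hT] with ω hω
        rw [hω]

theorem smul_mem_lambdaTilde2 [IsProbabilityMeasure P] {E : Type*} [NormedAddCommGroup E]
    [NormedSpace ℝ E] (hGH : mG ≤ mH) (hHF : mH ≤ mΩ) (hε : MemLp ε 2 P) (hc₁ : 0 < c₁)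
    (hvar : ∀ᵐ ω ∂P, P[fun ω => ε ω ^ 2|mH] ω ∈ Set.Icc c₁ c₂)
    (hW : W = fun ω => (P[fun ω => ε ω ^ 2|mH] ω)⁻¹) {Γ : Ω → E}
    (hΓm : StronglyMeasurable[mG] Γ) (hΓ : MemLp Γ 2 P) (hΓ0 : ∫ ω, Γ ω ∂P = 0) :
    (fun ω => (W ω * ε ω) • Γ ω) ∈ lambdaTilde2 P mG W ε :=
  ⟨Γ, hΓm, hΓ.integrable one_le_two, hΓ0, memLp_W_mul_ε_smul hGH hHF hε hc₁ hvar hW hΓm hΓ, rfl⟩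

theorem integral_inner_eq_zero_of_mem_lambdaTilde2 [IsProbabilityMeasure P] {E : Type*}
    [NormedAddCommGroup E] [InnerProductSpace ℝ E] [CompleteSpace E] (hGH : mG ≤ mH)
    (hHF : mH ≤ mΩ) (hε : MemLp ε 2 P) (hc₁ : 0 < c₁)
    (hvar : ∀ᵐ ω ∂P, P[fun ω => ε ω ^ 2|mH] ω ∈ Set.Icc c₁ c₂)
    (hW : W = fun ω => (P[fun ω => ε ω ^ 2|mH] ω)⁻¹) (hT : T = P[W|mG]) (κ : ℝ) (v : E)
    {g : Ω → E} (hg : g ∈ lambdaTilde2 P mG W ε) :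
    ∫ ω, ⟪((κ * T ω)⁻¹ * (W ω * ε ω)) • v, g ω⟫ ∂P = 0 := by
  obtain ⟨Γ, hΓm, hΓ, hΓ0, hWεΓ, rfl⟩ := hg
  have ham : StronglyMeasurable[mG] fun ω => (κ * T ω)⁻¹ := by
    simpa only [mul_inv] using (stronglyMeasurable_inv_T hT).const_mul κ⁻¹
  have ha : MemLp (fun ω => (κ * T ω)⁻¹) ⊤ P := by
    simpa only [mul_inv] using (memLp_top_inv_T hGH hHF hc₁ hvar hW hT).const_mul κ⁻¹
  rw [integral_inner_smul_W_mul_ε hGH hHF hε hc₁ hvar hW hT ham ha v hΓm hWεΓ]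
  calc ∫ ω, (κ * T ω)⁻¹ * ⟪v, Γ ω⟫ * T ω ∂P
      = ∫ ω, κ⁻¹ * ⟪v, Γ ω⟫ ∂P := integral_congr_ae <| by
        filter_upwards [ae_inv_T_mem_Icc hGH hHF hc₁ hvar hW hT] with ω hω
        have hTω : T ω ≠ 0 := (inv_pos.1 (hc₁.trans_le hω.1)).ne'
        rw [mul_inv, mul_right_comm, mul_assoc κ⁻¹, inv_mul_cancel₀ hTω, mul_one]
    _ = 0 := by rw [integral_const_mul, integral_inner hΓ, hΓ0, inner_zero_right, mul_zero]

theorem smul_sub_inv_mul_T_smul_mem_lambdaTilde2 [IsProbabilityMeasure P] {E : Type*}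
    [NormedAddCommGroup E] [NormedSpace ℝ E] [CompleteSpace E] (hGH : mG ≤ mH)
    (hHF : mH ≤ mΩ) (hε : MemLp ε 2 P) (hc₁ : 0 < c₁)
    (hvar : ∀ᵐ ω ∂P, P[fun ω => ε ω ^ 2|mH] ω ∈ Set.Icc c₁ c₂)
    (hW : W = fun ω => (P[fun ω => ε ω ^ 2|mH] ω)⁻¹) (hT : T = P[W|mG]) (v : E) :
    (fun ω => (W ω * ε ω) • v - (((∫ ω', (T ω')⁻¹ ∂P) * T ω)⁻¹ * (W ω * ε ω)) • v) ∈
      lambdaTilde2 P mG W ε := by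
  have hTinv := memLp_top_inv_T hGH hHF hc₁ hvar hW hT
  have hfactor : (fun ω => (W ω * ε ω) • v - (((∫ ω', (T ω')⁻¹ ∂P) * T ω)⁻¹ * (W ω * ε ω)) • v) =
      fun ω => (W ω * ε ω) • ((1 - (∫ ω', (T ω')⁻¹ ∂P)⁻¹ * (T ω)⁻¹) • v) := by
    funext ω
    rw [smul_smul, mul_inv, ← sub_smul]
    congr 1
    ring
  rw [hfactor]
  exact smul_mem_lambdaTilde2 hGH hHF hε hc₁ hvar hW
    ((stronglyMeasurable_const.sub ((stronglyMeasurable_inv_T hT).const_mul _)).smul_const v)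
    ((memLp_const v : MemLp _ 2 P).smul ((memLp_const 1).sub (hTinv.const_mul _)))
    (integral_one_sub_inv_integral_mul_smul_eq_zero (hTinv.integrable le_top)
      (integral_inv_T_pos hGH hHF hc₁ hvar hW hT).ne' v)

end Lambda2tilde

theorem projection_onto_Lambda2tilde_perp_general
    {Ω : Type*} {mΩ : MeasurableSpace Ω} (P : Measure Ω) [IsProbabilityMeasure P]
    {p : ℕ} {mG mH : MeasurableSpace Ω} (hGH : mG ≤ mH) (hHF : mH ≤ mΩ)
    (ε : Ω → ℝ) (hε : MemLp ε 2 P)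
    (c₁ c₂ : ℝ) (hc₁ : 0 < c₁)
    (hvar : ∀ᵐ ω ∂P, c₁ ≤ (P[fun ω => ε ω ^ 2|mH]) ω ∧ (P[fun ω => ε ω ^ 2|mH]) ω ≤ c₂)
    (W T : Ω → ℝ) (Tstar : ℝ)
    (hW : W = fun ω => ((P[fun ω => ε ω ^ 2|mH]) ω)⁻¹)
    (hT : T = P[W|mG]) (hTstar : Tstar = ∫ ω, (T ω)⁻¹ ∂P)
    (Λ2t : Set (Ω → EuclideanSpace ℝ (Fin p)))
    (hΛ2t : Λ2t = {g | ∃ Γs : Ω → EuclideanSpace ℝ (Fin p),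
      StronglyMeasurable[mG] Γs ∧ Integrable Γs P ∧ (∫ ω, Γs ω ∂P) = 0 ∧
      MemLp g 2 P ∧ g = fun ω => (W ω * ε ω) • Γs ω})
    (Dst : Ω → EuclideanSpace ℝ (Fin p)) (hDst : StronglyMeasurable[mG] Dst)
    (hDst2 : MemLp Dst 2 P)
    (Γs : Ω → EuclideanSpace ℝ (Fin p))
    (hΓs : Γs = fun ω => (T ω)⁻¹ • (Dst ω - Tstar⁻¹ • (∫ ω', (T ω')⁻¹ • Dst ω' ∂P))) :
    -- (i) Γ* is 𝒢-measurable with mean zero, and Γ*·W·ε ∈ Λ̃⁽²⁾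
    (StronglyMeasurable[mG] Γs ∧ (∫ ω, Γs ω ∂P) = 0 ∧
      (fun ω => (W ω * ε ω) • Γs ω) ∈ Λ2t) ∧
    -- (ii) the residual identity
    ((fun ω => ((T ω)⁻¹ * (W ω * ε ω)) • Dst ω - (W ω * ε ω) • Γs ω) =
      fun ω => ((Tstar * T ω)⁻¹ * (W ω * ε ω)) • (∫ ω', (T ω')⁻¹ • Dst ω' ∂P)) ∧
    -- (iii) the residual is orthogonal to Λ̃⁽²⁾
    (∀ h ∈ Λ2t,
      ∫ ω, ⟪((Tstar * T ω)⁻¹ * (W ω * ε ω)) • (∫ ω', (T ω')⁻¹ • Dst ω' ∂P), h ω⟫ ∂P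
        = 0) ∧
    -- (iv) in particular, for a constant vector c
    (∀ cv : EuclideanSpace ℝ (Fin p),
      (fun ω => (W ω * ε ω) • cv - ((Tstar * T ω)⁻¹ * (W ω * ε ω)) • cv) ∈ Λ2t ∧
      ∀ h ∈ Λ2t,
        ∫ ω, ⟪((Tstar * T ω)⁻¹ * (W ω * ε ω)) • cv, h ω⟫ ∂P = 0) := by
  subst hΛ2t hTstar
  have hTinv := memLp_top_inv_T hGH hHF hc₁ hvar hW hT
  have horth (v : EuclideanSpace ℝ (Fin p)) (g) (hg : g ∈ lambdaTilde2 P mG W ε) :=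
    integral_inner_eq_zero_of_mem_lambdaTilde2 hGH hHF hε hc₁ hvar hW hT (∫ ω, (T ω)⁻¹ ∂P) v hg
  have hΓm : StronglyMeasurable[mG] Γs :=
    hΓs ▸ (stronglyMeasurable_inv_T hT).smul (hDst.sub stronglyMeasurable_const)
  have hΓ0 : ∫ ω, Γs ω ∂P = 0 := hΓs ▸
    integral_smul_sub_inv_integral_smul_eq_zero (hTinv.integrable le_top)
      ((hDst2.smul hTinv).integrable one_le_two) (integral_inv_T_pos hGH hHF hc₁ hvar hW hT).ne'
  refine ⟨⟨hΓm, hΓ0, smul_mem_lambdaTilde2 hGH hHF hε hc₁ hvar hW hΓm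
      (hΓs ▸ (hDst2.sub (memLp_const _)).smul hTinv) hΓ0⟩, ?_, horth _,
    fun cv => ⟨smul_sub_inv_mul_T_smul_mem_lambdaTilde2 hGH hHF hε hc₁ hvar hW hT cv, horth cv⟩⟩
  funext ω
  simp only [hΓs, smul_sub, smul_smul, mul_inv, mul_comm (W ω * ε ω), sub_sub_cancel]
  congr 1
  ring

/-- Lemma S-(A4.2c): with `Γ* = T⁻¹(D* − (T*)⁻¹E[T⁻¹D*])`,
`Γ*·W·ε ∈ Λ̃⁽²⁾`, the difference `D*·T⁻¹·W·ε − Γ*·W·ε` equals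
`E[D*·T⁻¹]·(T*·T)⁻¹·W·ε` and is orthogonal to `Λ̃⁽²⁾`; hence the projection of
`D*·T⁻¹·W·ε` onto `Λ̃⁽²⁾^⊥` is `E[D*·T⁻¹]·(T*·T)⁻¹·W·ε`, and in particular the
projection of `c·W·ε` onto `Λ̃⁽²⁾^⊥` is `c·(T*·T)⁻¹·W·ε`. -/
theorem projection_onto_Lambda2tilde_perp
    {Ω : Type*} {mΩ : MeasurableSpace Ω} (P : Measure Ω) [IsProbabilityMeasure P]
    {p : ℕ} {mG mH : MeasurableSpace Ω} (hGH : mG ≤ mH) (hHF : mH ≤ mΩ)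
    (ε : Ω → ℝ) (hε : MemLp ε 2 P) (hεH : P[ε|mH] =ᵐ[P] 0)
    (c₁ c₂ : ℝ) (hc₁ : 0 < c₁)
    (hvar : ∀ᵐ ω ∂P, c₁ ≤ (P[fun ω => ε ω ^ 2|mH]) ω ∧ (P[fun ω => ε ω ^ 2|mH]) ω ≤ c₂)
    (W T : Ω → ℝ) (Tstar : ℝ)
    (hW : W = fun ω => ((P[fun ω => ε ω ^ 2|mH]) ω)⁻¹)
    (hT : T = P[W|mG]) (hTstar : Tstar = ∫ ω, (T ω)⁻¹ ∂P)
    (Λ2t : Set (Ω → EuclideanSpace ℝ (Fin p)))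
    (hΛ2t : Λ2t = {g | ∃ Γs : Ω → EuclideanSpace ℝ (Fin p),
      StronglyMeasurable[mG] Γs ∧ Integrable Γs P ∧ (∫ ω, Γs ω ∂P) = 0 ∧
      MemLp g 2 P ∧ g = fun ω => (W ω * ε ω) • Γs ω})
    (Dst : Ω → EuclideanSpace ℝ (Fin p)) (hDst : StronglyMeasurable[mG] Dst)
    (hDst2 : MemLp Dst 2 P)
    (Γs : Ω → EuclideanSpace ℝ (Fin p))
    (hΓs : Γs = fun ω => (T ω)⁻¹ • (Dst ω - Tstar⁻¹ • (∫ ω', (T ω')⁻¹ • Dst ω' ∂P))) :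
    -- (i) Γ* is 𝒢-measurable with mean zero, and Γ*·W·ε ∈ Λ̃⁽²⁾
    (StronglyMeasurable[mG] Γs ∧ (∫ ω, Γs ω ∂P) = 0 ∧
      (fun ω => (W ω * ε ω) • Γs ω) ∈ Λ2t) ∧
    -- (ii) the residual identity
    ((fun ω => ((T ω)⁻¹ * (W ω * ε ω)) • Dst ω - (W ω * ε ω) • Γs ω) =
      fun ω => ((Tstar * T ω)⁻¹ * (W ω * ε ω)) • (∫ ω', (T ω')⁻¹ • Dst ω' ∂P)) ∧
    -- (iii) the residual is orthogonal to Λ̃⁽²⁾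
    (∀ h ∈ Λ2t,
      ∫ ω, ⟪((Tstar * T ω)⁻¹ * (W ω * ε ω)) • (∫ ω', (T ω')⁻¹ • Dst ω' ∂P), h ω⟫ ∂P
        = 0) ∧
    -- (iv) in particular, for a constant vector c
    (∀ cv : EuclideanSpace ℝ (Fin p),
      (fun ω => (W ω * ε ω) • cv - ((Tstar * T ω)⁻¹ * (W ω * ε ω)) • cv) ∈ Λ2t ∧
      ∀ h ∈ Λ2t,
        ∫ ω, ⟪((Tstar * T ω)⁻¹ * (W ω * ε ω)) • cv, h ω⟫ ∂P = 0) :=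
  projection_onto_Lambda2tilde_perp_general P hGH hHF ε hε c₁ c₂ hc₁ hvar W T Tstar hW hT hTstar Λ2t
    hΛ2t Dst hDst hDst2 Γs hΓs
end

section
/- (Equation (A4.4): projection onto the enlarged space Λ̂⁽²⁾.) Let Λ̂⁽²⁾ = {B·W·ε : B is 𝒢-measurable ℝ^p-valued with B·W·ε ∈ H}. For any ℋ-measurable ℝ^p-valued G with the required integrability, the element (G − E[G·W | 𝒢]·T⁻¹)·W·ε is orthogonal to every element of Λ̂⁽²⁾, and E[G·W | 𝒢]·T⁻¹·W·ε ∈ Λ̂⁽²⁾. Consequently, the orthogonal projection of G·W·ε onto Λ̂⁽²⁾ equals E[G·W | 𝒢]·T⁻¹·W·ε. -/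
/-!
Write `κ = E[ε² | ℋ]`, so `W = κ⁻¹`. For `ℋ`-measurable `u`, `v`, pulling `u` and `v` out of
`E[· | ℋ]` gives `E⟪ε u, ε v⟫ = E[κ ⟪u, v⟫]`; hence on multiples of `W ε` the inner product of `H`
is `E[W ⟪·, ·⟫]`, and orthogonality to `B·W·ε` with `B` `𝒢`-measurable reduces to
`E[W ⟪G, B⟫] = E⟪E[W G | 𝒢], B⟫ = E[W T⁻¹ ⟪E[W G | 𝒢], B⟫]`, two pull-outs from `E[· | 𝒢]`
(the second uses `E[W | 𝒢] = T`). The candidate has mean zero because `E[ε | ℋ] = 0`.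
Finally `E‖ε f‖² = E[κ ‖f‖²]` for `ℋ`-measurable `f`, so the bounds `c₁ ≤ κ ≤ c₂` make
`B·W·ε ∈ L²` equivalent to `B ∈ L²` and `W`, `T⁻¹` bounded, which settles all integrability
conditions.
-/

open MeasureTheory
open scoped RealInnerProductSpace ENNReal

namespace MeasureTheory

section CondExp

variable {Ω : Type*} {m mΩ : MeasurableSpace Ω} {P : Measure Ω}

theorem integral_bilin_condExp_of_stronglyMeasurable_right {E F G : Type*}
    [NormedAddCommGroup E] [NormedSpace ℝ E] [NormedAddCommGroup F] [NormedSpace ℝ F]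
    [CompleteSpace F] [NormedAddCommGroup G] [NormedSpace ℝ G] [CompleteSpace G]
    (L : F →L[ℝ] E →L[ℝ] G) (hm : m ≤ mΩ) [SigmaFinite (P.trim hm)] {f : Ω → F} {g : Ω → E}
    (hg : StronglyMeasurable[m] g) (hfg : Integrable (fun ω ↦ L (f ω) (g ω)) P)
    (hf : Integrable f P) :
    ∫ ω, L (f ω) (g ω) ∂P = ∫ ω, L (P[f|m] ω) (g ω) ∂P :=
  (integral_condExp hm).symm.trans
    (integral_congr_ae (condExp_bilin_of_stronglyMeasurable_right L hg hfg hf))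

theorem integral_mul_condExp_of_stronglyMeasurable_right (hm : m ≤ mΩ)
    [SigmaFinite (P.trim hm)] {f g : Ω → ℝ} (hg : StronglyMeasurable[m] g)
    (hfg : Integrable (fun ω ↦ f ω * g ω) P) (hf : Integrable f P) :
    ∫ ω, f ω * g ω ∂P = ∫ ω, P[f|m] ω * g ω ∂P :=
  integral_bilin_condExp_of_stronglyMeasurable_right (.mul ℝ ℝ) hm hg hfg hf

theorem integral_inner_condExp_of_stronglyMeasurable_right {E : Type*} [NormedAddCommGroup E]
    [InnerProductSpace ℝ E] [CompleteSpace E] (hm : m ≤ mΩ) [SigmaFinite (P.trim hm)]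
    {f g : Ω → E} (hg : StronglyMeasurable[m] g) (hfg : Integrable (fun ω ↦ ⟪f ω, g ω⟫) P)
    (hf : Integrable f P) :
    ∫ ω, ⟪f ω, g ω⟫ ∂P = ∫ ω, ⟪P[f|m] ω, g ω⟫ ∂P :=
  integral_bilin_condExp_of_stronglyMeasurable_right (innerSL ℝ) hm hg hfg hf

theorem integral_mul_smul_eq_zero_of_condExp_eq_zero {E : Type*} [NormedAddCommGroup E]
    [NormedSpace ℝ E] [CompleteSpace E] (hm : m ≤ mΩ) [SigmaFinite (P.trim hm)]
    {ε W : Ω → ℝ} {f : Ω → E} (hWm : StronglyMeasurable[m] W) (hfm : StronglyMeasurable[m] f)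
    (hWεf : Integrable (fun ω ↦ (W ω * ε ω) • f ω) P) (hε : Integrable ε P)
    (hε0 : P[ε|m] =ᵐ[P] 0) :
    ∫ ω, (W ω * ε ω) • f ω ∂P = 0 := by
  simp_rw [mul_comm (W _), ← smul_smul] at hWεf ⊢
  refine (integral_bilin_condExp_of_stronglyMeasurable_right (.lsmul ℝ ℝ) hm (hWm.smul hfm)
    hWεf hε).trans (integral_eq_zero_of_ae ?_)
  filter_upwards [hε0] with ω hω
  simp [hω]

theorem ae_condExp_mem_Icc (hm : m ≤ mΩ) [IsFiniteMeasure P] {f : Ω → ℝ} {a b : ℝ}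
    (hf : Integrable f P) (hfab : ∀ᵐ ω ∂P, f ω ∈ Set.Icc a b) :
    ∀ᵐ ω ∂P, P[f|m] ω ∈ Set.Icc a b := by
  have ha : P[fun _ ↦ a|m] ≤ᵐ[P] P[f|m] :=
    condExp_mono (integrable_const a) hf (hfab.mono fun _ h ↦ h.1)
  have hb : P[f|m] ≤ᵐ[P] P[fun _ ↦ b|m] :=
    condExp_mono hf (integrable_const b) (hfab.mono fun _ h ↦ h.2)
  rw [condExp_const hm] at ha hb
  filter_upwards [ha, hb] with ω h₁ h₂ using ⟨h₁, h₂⟩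

end CondExp

section SecondMoment

variable {Ω E : Type*} {m mΩ : MeasurableSpace Ω} {P : Measure Ω} [NormedAddCommGroup E]

theorem memLp_two_iff_lintegral_ofReal_sq_norm_lt_top {f : Ω → E}
    (hf : AEStronglyMeasurable f P) :
    MemLp f 2 P ↔ ∫⁻ ω, ENNReal.ofReal (‖f ω‖ ^ 2) ∂P < ∞ := by
  rw [memLp_two_iff_integrable_sq_norm hf, Integrable,
    hasFiniteIntegral_iff_ofReal (ae_of_all _ fun _ ↦ sq_nonneg _)]
  exact and_iff_right (hf.norm.aemeasurable.pow_const 2).aestronglyMeasurable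

variable [NormedSpace ℝ E]

theorem MemLp.smul_of_ae_norm_le [IsFiniteMeasure P] {p : ℝ≥0∞} {f : Ω → E} {φ : Ω → ℝ}
    {C : ℝ} (hf : MemLp f p P) (hφ : AEStronglyMeasurable φ P) (hφC : ∀ᵐ ω ∂P, ‖φ ω‖ ≤ C) :
    MemLp (fun ω ↦ φ ω • f ω) p P :=
  hf.smul (p := ⊤) (.of_bound hφ C hφC)

theorem MemLp.of_smul_of_le {p : ℝ≥0∞} {f : Ω → E} {φ : Ω → ℝ} {a : ℝ} (ha : 0 < a)
    (hφ : ∀ᵐ ω ∂P, a ≤ φ ω) (hf : AEStronglyMeasurable f P)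
    (hφf : MemLp (fun ω ↦ φ ω • f ω) p P) : MemLp f p P :=
  hφf.of_le_mul (c := a⁻¹) hf <| hφ.mono fun ω h ↦ by
    rw [norm_smul, Real.norm_of_nonneg (ha.le.trans h), ← mul_assoc]
    exact le_mul_of_one_le_left (norm_nonneg _) ((one_le_inv_mul₀ ha).2 h)

/-- The measures `f • P` and `E[f | m] • P` agree on `m`, hence integrate `m`-measurable
functions alike. -/
theorem lintegral_mul_ofReal_condExp (hm : m ≤ mΩ) [SigmaFinite (P.trim hm)] {f : Ω → ℝ}
    (hf : Integrable f P) (hf0 : 0 ≤ᵐ[P] f) {Y : Ω → ℝ≥0∞} (hY : Measurable[m] Y) :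
    ∫⁻ ω, Y ω * ENNReal.ofReal (f ω) ∂P = ∫⁻ ω, Y ω * ENNReal.ofReal (P[f|m] ω) ∂P := by
  have h_trim : (P.withDensity fun ω ↦ ENNReal.ofReal (f ω)).trim hm
      = (P.withDensity fun ω ↦ ENNReal.ofReal (P[f|m] ω)).trim hm := by
    refine @Measure.ext _ m _ _ fun s hs ↦ ?_
    rw [trim_measurableSet_eq hm hs, trim_measurableSet_eq hm hs,
      withDensity_apply _ (hm s hs), withDensity_apply _ (hm s hs),
      ← ofReal_integral_eq_lintegral_ofReal hf.integrableOn (ae_restrict_of_ae hf0),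
      ← ofReal_integral_eq_lintegral_ofReal integrable_condExp.integrableOn
        (ae_restrict_of_ae (condExp_nonneg hf0)),
      setIntegral_condExp hm hf hs]
  have h_density : ∀ φ : Ω → ℝ≥0∞, AEMeasurable φ P →
      ∫⁻ ω, Y ω * φ ω ∂P = ∫⁻ ω, Y ω ∂((P.withDensity φ).trim hm) := fun φ hφ ↦ by
    rw [lintegral_trim hm hY,
      lintegral_withDensity_eq_lintegral_mul₀ hφ (hY.mono hm le_rfl).aemeasurable]
    simp_rw [Pi.mul_apply, mul_comm]
  rw [h_density _ hf.aemeasurable.ennreal_ofReal,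
    h_density _ integrable_condExp.aemeasurable.ennreal_ofReal, h_trim]

theorem lintegral_ofReal_norm_smul_sq (hm : m ≤ mΩ) [SigmaFinite (P.trim hm)] {ε : Ω → ℝ}
    (hε : MemLp ε 2 P) {f : Ω → E} (hf : StronglyMeasurable[m] f) :
    ∫⁻ ω, ENNReal.ofReal (‖ε ω • f ω‖ ^ 2) ∂P
      = ∫⁻ ω, ENNReal.ofReal (‖f ω‖ ^ 2) * ENNReal.ofReal (P[fun ω ↦ ε ω ^ 2|m] ω) ∂P := by
  have h_sq : ∀ ω, ‖ε ω • f ω‖ ^ 2 = ‖f ω‖ ^ 2 * ε ω ^ 2 := fun ω ↦ by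
    rw [norm_smul, mul_pow, Real.norm_eq_abs, sq_abs, mul_comm]
  simp_rw [h_sq, ENNReal.ofReal_mul (sq_nonneg _)]
  exact lintegral_mul_ofReal_condExp hm hε.integrable_sq (ae_of_all _ fun _ ↦ sq_nonneg _)
    (hf.norm.measurable.pow_const 2).ennreal_ofReal

theorem memLp_smul_of_condExp_sq_le (hm : m ≤ mΩ) [SigmaFinite (P.trim hm)] {ε : Ω → ℝ}
    (hε : MemLp ε 2 P) {c : ℝ} (hεc : ∀ᵐ ω ∂P, P[fun ω ↦ ε ω ^ 2|m] ω ≤ c) {f : Ω → E}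
    (hfm : StronglyMeasurable[m] f) (hf : MemLp f 2 P) :
    MemLp (fun ω ↦ ε ω • f ω) 2 P := by
  rw [memLp_two_iff_lintegral_ofReal_sq_norm_lt_top hf.1] at hf
  rw [memLp_two_iff_lintegral_ofReal_sq_norm_lt_top (f := fun ω ↦ ε ω • f ω)
      (hε.1.smul (hfm.mono hm).aestronglyMeasurable),
    lintegral_ofReal_norm_smul_sq hm hε hfm]
  calc _ ≤ ∫⁻ ω, ENNReal.ofReal (‖f ω‖ ^ 2) * ENNReal.ofReal c ∂P :=
        lintegral_mono_ae (hεc.mono fun ω h ↦ by gcongr)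
    _ = (∫⁻ ω, ENNReal.ofReal (‖f ω‖ ^ 2) ∂P) * ENNReal.ofReal c :=
        lintegral_mul_const'' _
          ((hfm.mono hm).aestronglyMeasurable.norm.aemeasurable.pow_const 2).ennreal_ofReal
    _ < ∞ := ENNReal.mul_lt_top hf ENNReal.ofReal_lt_top

theorem memLp_of_smul_of_le_condExp_sq (hm : m ≤ mΩ) [SigmaFinite (P.trim hm)] {ε : Ω → ℝ}
    (hε : MemLp ε 2 P) {c : ℝ} (hc : 0 < c) (hεc : ∀ᵐ ω ∂P, c ≤ P[fun ω ↦ ε ω ^ 2|m] ω)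
    {f : Ω → E} (hfm : StronglyMeasurable[m] f) (hεf : MemLp (fun ω ↦ ε ω • f ω) 2 P) :
    MemLp f 2 P := by
  rw [memLp_two_iff_lintegral_ofReal_sq_norm_lt_top hεf.1,
    lintegral_ofReal_norm_smul_sq hm hε hfm] at hεf
  rw [memLp_two_iff_lintegral_ofReal_sq_norm_lt_top (hfm.mono hm).aestronglyMeasurable]
  refine ENNReal.lt_top_of_mul_ne_top_right ?_ (ENNReal.ofReal_pos.mpr hc).ne'
  refine (lt_of_le_of_lt ?_ hεf).ne
  calc _ = ∫⁻ ω, ENNReal.ofReal (‖f ω‖ ^ 2) * ENNReal.ofReal c ∂P := by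
        rw [lintegral_mul_const'' _
          ((hfm.mono hm).aestronglyMeasurable.norm.aemeasurable.pow_const 2).ennreal_ofReal,
          mul_comm]
    _ ≤ _ := lintegral_mono_ae (hεc.mono fun ω h ↦ by gcongr)

theorem memLp_mul_smul_of_condExp_sq_le (hm : m ≤ mΩ) [IsFiniteMeasure P] {ε : Ω → ℝ}
    (hε : MemLp ε 2 P) {c : ℝ} (hεc : ∀ᵐ ω ∂P, P[fun ω ↦ ε ω ^ 2|m] ω ≤ c) {W : Ω → ℝ}
    {C : ℝ} (hWm : StronglyMeasurable[m] W) (hWC : ∀ᵐ ω ∂P, ‖W ω‖ ≤ C) {f : Ω → E}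
    (hfm : StronglyMeasurable[m] f) (hf : MemLp f 2 P) :
    MemLp (fun ω ↦ (W ω * ε ω) • f ω) 2 P := by
  simp_rw [mul_comm (W _), ← smul_smul]
  exact memLp_smul_of_condExp_sq_le hm hε hεc (hWm.smul hfm)
    (hf.smul_of_ae_norm_le (hWm.mono hm).aestronglyMeasurable hWC)

theorem memLp_of_mul_smul_of_le_condExp_sq (hm : m ≤ mΩ) [SigmaFinite (P.trim hm)]
    {ε : Ω → ℝ} (hε : MemLp ε 2 P) {c : ℝ} (hc : 0 < c)
    (hεc : ∀ᵐ ω ∂P, c ≤ P[fun ω ↦ ε ω ^ 2|m] ω) {W : Ω → ℝ} {a : ℝ} (ha : 0 < a)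
    (hW : ∀ᵐ ω ∂P, a ≤ W ω) (hWm : StronglyMeasurable[m] W) {f : Ω → E}
    (hfm : StronglyMeasurable[m] f) (hWεf : MemLp (fun ω ↦ (W ω * ε ω) • f ω) 2 P) :
    MemLp f 2 P := by
  simp_rw [mul_comm (W _), ← smul_smul] at hWεf
  exact (memLp_of_smul_of_le_condExp_sq hm hε hc hεc (hWm.smul hfm) hWεf).of_smul_of_le ha hW
    (hfm.mono hm).aestronglyMeasurable

end SecondMoment

section WeightedProjection

variable {Ω E : Type*} {m mΩ : MeasurableSpace Ω} {P : Measure Ω}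
  [NormedAddCommGroup E] [InnerProductSpace ℝ E]

theorem MemLp.integrable_inner {f g : Ω → E} (hf : MemLp f 2 P) (hg : MemLp g 2 P) :
    Integrable (fun ω ↦ ⟪f ω, g ω⟫) P :=
  memLp_one_iff_integrable.1 ((innerSL ℝ).memLp_of_bilin 1 hf hg)

theorem ae_norm_le_of_mem_Icc {W : Ω → ℝ} {a b : ℝ} (ha : 0 ≤ a)
    (hW : ∀ᵐ ω ∂P, W ω ∈ Set.Icc a b) : ∀ᵐ ω ∂P, ‖W ω‖ ≤ b :=
  hW.mono fun _ h ↦ (Real.norm_of_nonneg (ha.trans h.1)).trans_le h.2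

theorem ae_norm_inv_condExp_le (hm : m ≤ mΩ) [IsFiniteMeasure P] {W : Ω → ℝ} {a b : ℝ}
    (ha : 0 < a) (hWm : AEStronglyMeasurable W P) (hW : ∀ᵐ ω ∂P, W ω ∈ Set.Icc a b) :
    ∀ᵐ ω ∂P, ‖(P[W|m] ω)⁻¹‖ ≤ a⁻¹ := by
  filter_upwards [ae_condExp_mem_Icc hm (.of_bound hWm b (ae_norm_le_of_mem_Icc ha.le hW)) hW]
    with ω h
  rw [norm_inv, Real.norm_of_nonneg (ha.le.trans h.1)]
  exact inv_anti₀ ha h.1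

variable [CompleteSpace E]

theorem integral_mul_inv_condExp_mul (hm : m ≤ mΩ) [SigmaFinite (P.trim hm)] {W g : Ω → ℝ}
    (hW : Integrable W P) (hg : StronglyMeasurable[m] g)
    (hWg : Integrable (fun ω ↦ W ω * ((P[W|m] ω)⁻¹ * g ω)) P)
    (hT : ∀ᵐ ω ∂P, P[W|m] ω ≠ 0) :
    ∫ ω, W ω * ((P[W|m] ω)⁻¹ * g ω) ∂P = ∫ ω, g ω ∂P := by
  refine (integral_mul_condExp_of_stronglyMeasurable_right hm (g := fun ω ↦ (P[W|m] ω)⁻¹ * g ω)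
    (stronglyMeasurable_condExp.measurable.inv.stronglyMeasurable.mul hg) hWg hW).trans ?_
  exact integral_congr_ae (hT.mono fun ω h ↦ mul_inv_cancel_left₀ h _)

theorem memLp_inv_condExp_smul_condExp (hm : m ≤ mΩ) [IsFiniteMeasure P] {W : Ω → ℝ}
    {a b : ℝ} (ha : 0 < a) (hWm : AEStronglyMeasurable W P) (hW : ∀ᵐ ω ∂P, W ω ∈ Set.Icc a b)
    {G : Ω → E} (hG : MemLp G 2 P) :
    MemLp (fun ω ↦ (P[W|m] ω)⁻¹ • P[fun ω ↦ W ω • G ω|m] ω) 2 P :=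
  ((hG.smul_of_ae_norm_le hWm (ae_norm_le_of_mem_Icc ha.le hW)).condExp one_le_two)
    |>.smul_of_ae_norm_le (stronglyMeasurable_condExp.mono hm).measurable.inv.aestronglyMeasurable
      (ae_norm_inv_condExp_le hm ha hWm hW)

theorem integral_mul_inner_sub_inv_condExp_smul_condExp_eq_zero (hm : m ≤ mΩ)
    [IsFiniteMeasure P] {W : Ω → ℝ} {a b : ℝ} (ha : 0 < a) (hWm : AEStronglyMeasurable W P)
    (hW : ∀ᵐ ω ∂P, W ω ∈ Set.Icc a b) {G B : Ω → E} (hG : MemLp G 2 P)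
    (hBm : StronglyMeasurable[m] B) (hB : MemLp B 2 P) :
    ∫ ω, W ω * ⟪G ω - (P[W|m] ω)⁻¹ • P[fun ω ↦ W ω • G ω|m] ω, B ω⟫ ∂P = 0 := by
  set F := P[fun ω ↦ W ω • G ω|m]
  have hW_bdd := ae_norm_le_of_mem_Icc ha.le hW
  have hWi : Integrable W P := .of_bound hWm b hW_bdd
  have hWG : MemLp (fun ω ↦ W ω • G ω) 2 P := hG.smul_of_ae_norm_le hWm hW_bdd
  have hFB : Integrable (fun ω ↦ ⟪F ω, B ω⟫) P := (hWG.condExp one_le_two).integrable_inner hB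
  have hTFB : Integrable (fun ω ↦ W ω * ((P[W|m] ω)⁻¹ * ⟪F ω, B ω⟫)) P :=
    (hFB.bdd_mul (stronglyMeasurable_condExp.mono hm).measurable.inv.aestronglyMeasurable
      (ae_norm_inv_condExp_le hm ha hWm hW)).bdd_mul hWm hW_bdd
  have hT : ∀ᵐ ω ∂P, P[W|m] ω ≠ 0 :=
    (ae_condExp_mem_Icc hm hWi hW).mono fun _ h ↦ (ha.trans_le h.1).ne'
  calc
    _ = ∫ ω, ⟪W ω • G ω, B ω⟫ ∂P - ∫ ω, W ω * ((P[W|m] ω)⁻¹ * ⟪F ω, B ω⟫) ∂P := by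
        rw [← integral_sub (hWG.integrable_inner hB) hTFB]
        simp only [inner_sub_left, inner_smul_left, conj_trivial, mul_sub]
    _ = 0 := by
        rw [integral_inner_condExp_of_stronglyMeasurable_right hm hBm
            (hWG.integrable_inner hB) (hWG.integrable one_le_two),
          integral_mul_inv_condExp_mul hm hWi (stronglyMeasurable_condExp.inner hBm) hTFB hT,
          sub_self]

end WeightedProjection

section Residual

variable {Ω E : Type*} {mG mH mΩ : MeasurableSpace Ω} {P : Measure Ω}
  [NormedAddCommGroup E] [InnerProductSpace ℝ E]

theorem ae_mem_Icc_inv_of_mul_eq_one {W κ : Ω → ℝ} {c₁ c₂ : ℝ} (hc₁ : 0 < c₁)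
    (hκ : ∀ᵐ ω ∂P, κ ω ∈ Set.Icc c₁ c₂) (hW : ∀ᵐ ω ∂P, W ω * κ ω = 1) :
    ∀ᵐ ω ∂P, W ω ∈ Set.Icc c₂⁻¹ c₁⁻¹ := by
  filter_upwards [hκ, hW] with ω hκω hWω
  rw [eq_inv_of_mul_eq_one_left hWω]
  exact ⟨inv_anti₀ (hc₁.trans_le hκω.1) hκω.2, inv_anti₀ hc₁ hκω.1⟩

theorem integral_inner_smul_smul_eq_integral_condExp_sq_mul (hm : mH ≤ mΩ)
    [SigmaFinite (P.trim hm)] {ε : Ω → ℝ} (hε : MemLp ε 2 P) {u v : Ω → E}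
    (hu : StronglyMeasurable[mH] u) (hv : StronglyMeasurable[mH] v)
    (huv : Integrable (fun ω ↦ ⟪ε ω • u ω, ε ω • v ω⟫) P) :
    ∫ ω, ⟪ε ω • u ω, ε ω • v ω⟫ ∂P = ∫ ω, P[fun ω ↦ ε ω ^ 2|mH] ω * ⟪u ω, v ω⟫ ∂P := by
  have h_sq : ∀ ω, ⟪ε ω • u ω, ε ω • v ω⟫ = ε ω ^ 2 * ⟪u ω, v ω⟫ := fun ω ↦ by
    rw [real_inner_smul_left, real_inner_smul_right]
    ring
  simp_rw [h_sq] at huv ⊢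
  exact integral_mul_condExp_of_stronglyMeasurable_right hm (hu.inner hv) huv hε.integrable_sq

variable [CompleteSpace E]

theorem integral_inner_mul_smul_sub_inv_condExp_smul_condExp_eq_zero
    [IsProbabilityMeasure P] (hGH : mG ≤ mH) (hHF : mH ≤ mΩ) {ε : Ω → ℝ}
    (hε : MemLp ε 2 P) {c₁ c₂ : ℝ} (hc₁ : 0 < c₁)
    (hκ : ∀ᵐ ω ∂P, P[fun ω ↦ ε ω ^ 2|mH] ω ∈ Set.Icc c₁ c₂) {W : Ω → ℝ}
    (hWm : StronglyMeasurable[mH] W) (hW : ∀ᵐ ω ∂P, W ω * P[fun ω ↦ ε ω ^ 2|mH] ω = 1)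
    {G B : Ω → E} (hGm : StronglyMeasurable[mH] G) (hG : MemLp G 2 P)
    (hBm : StronglyMeasurable[mG] B) (hWεB : MemLp (fun ω ↦ (W ω * ε ω) • B ω) 2 P) :
    ∫ ω, ⟪(W ω * ε ω) • (G ω - (P[W|mG] ω)⁻¹ • P[fun ω ↦ W ω • G ω|mG] ω),
      (W ω * ε ω) • B ω⟫ ∂P = 0 := by
  have hGΩ : mG ≤ mΩ := hGH.trans hHF
  have hc₂ : 0 < c₂⁻¹ := inv_pos.2 <| let ⟨_, h⟩ := hκ.exists; hc₁.trans_le (h.1.trans h.2)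
  have hW_Icc := ae_mem_Icc_inv_of_mul_eq_one hc₁ hκ hW
  have hWm' : AEStronglyMeasurable W P := (hWm.mono hHF).aestronglyMeasurable
  set R := fun ω ↦ G ω - (P[W|mG] ω)⁻¹ • P[fun ω ↦ W ω • G ω|mG] ω
  have hRm : StronglyMeasurable[mH] R := hGm.sub <| (stronglyMeasurable_condExp.measurable.inv
    |>.stronglyMeasurable.smul stronglyMeasurable_condExp).mono hGH
  have hR : MemLp R 2 P := hG.sub (memLp_inv_condExp_smul_condExp hGΩ hc₂ hWm' hW_Icc hG)
  have hB : MemLp B 2 P := memLp_of_mul_smul_of_le_condExp_sq hHF hε hc₁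
    (hκ.mono fun _ h ↦ h.1) hc₂ (hW_Icc.mono fun _ h ↦ h.1) hWm (hBm.mono hGH) hWεB
  have hWεR : MemLp (fun ω ↦ (W ω * ε ω) • R ω) 2 P := memLp_mul_smul_of_condExp_sq_le hHF hε
    (hκ.mono fun _ h ↦ h.2) hWm (ae_norm_le_of_mem_Icc hc₂.le hW_Icc) hRm hR
  have h_smul : ∀ (x : E) ω, (W ω * ε ω) • x = ε ω • W ω • x := fun x ω ↦ by
    rw [smul_smul, mul_comm]
  simp_rw [h_smul] at hWεB hWεR ⊢
  calc
    _ = ∫ ω, P[fun ω ↦ ε ω ^ 2|mH] ω * ⟪W ω • R ω, W ω • B ω⟫ ∂P :=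
        integral_inner_smul_smul_eq_integral_condExp_sq_mul hHF hε (hWm.smul hRm)
          (hWm.smul (hBm.mono hGH)) (hWεR.integrable_inner hWεB)
    _ = ∫ ω, W ω * ⟪R ω, B ω⟫ ∂P := integral_congr_ae <| hW.mono fun ω h ↦ by
        simp only [real_inner_smul_left, real_inner_smul_right]
        linear_combination W ω * ⟪R ω, B ω⟫ * h
    _ = 0 := integral_mul_inner_sub_inv_condExp_smul_condExp_eq_zero hGΩ hc₂ hWm' hW_Icc hG hBm hB

end Residual

end MeasureTheory

theorem projection_onto_enlarged_Lambda2hat_general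
    {Ω : Type*} {mΩ : MeasurableSpace Ω} (P : Measure Ω) [IsProbabilityMeasure P]
    {p : ℕ} {mG mH : MeasurableSpace Ω} (hGH : mG ≤ mH) (hHF : mH ≤ mΩ)
    (ε : Ω → ℝ) (hε : MemLp ε 2 P) (hεH : P[ε|mH] =ᵐ[P] 0)
    (c₁ c₂ : ℝ) (hc₁ : 0 < c₁)
    (hvar : ∀ᵐ ω ∂P, c₁ ≤ (P[fun ω => ε ω ^ 2|mH]) ω ∧ (P[fun ω => ε ω ^ 2|mH]) ω ≤ c₂)
    (W T : Ω → ℝ)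
    (hW : W = fun ω => ((P[fun ω => ε ω ^ 2|mH]) ω)⁻¹)
    (hT : T = P[W|mG])
    (Λ2h : Set (Ω → EuclideanSpace ℝ (Fin p)))
    (hΛ2h : Λ2h = {g | ∃ B : Ω → EuclideanSpace ℝ (Fin p),
      StronglyMeasurable[mG] B ∧ MemLp g 2 P ∧ (∫ ω, g ω ∂P) = 0 ∧
      g = fun ω => (W ω * ε ω) • B ω})
    (G : Ω → EuclideanSpace ℝ (Fin p)) (hG : StronglyMeasurable[mH] G)
    (hG2 : MemLp G 2 P) :
    -- the residual is orthogonal to every element of Λ̂⁽²⁾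
    (∀ h ∈ Λ2h,
      ∫ ω, ⟪(W ω * ε ω) • (G ω - (T ω)⁻¹ • (P[fun ω => W ω • G ω|mG]) ω), h ω⟫ ∂P
        = 0) ∧
    -- the candidate belongs to Λ̂⁽²⁾
    (fun ω => (W ω * ε ω) • ((T ω)⁻¹ • (P[fun ω => W ω • G ω|mG]) ω)) ∈ Λ2h := by
  have hWm : StronglyMeasurable[mH] W :=
    hW ▸ stronglyMeasurable_condExp.measurable.inv.stronglyMeasurable
  have hWκ : ∀ᵐ ω ∂P, W ω * P[fun ω ↦ ε ω ^ 2|mH] ω = 1 := by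
    filter_upwards [hvar] with ω hω
    rw [hW]
    exact inv_mul_cancel₀ (hc₁.trans_le hω.1).ne'
  have hW_Icc := ae_mem_Icc_inv_of_mul_eq_one hc₁ hvar hWκ
  have hc₂ : 0 < c₂⁻¹ := inv_pos.2 <| let ⟨_, h⟩ := hvar.exists; hc₁.trans_le (h.1.trans h.2)
  subst hT hΛ2h
  set B₀ := fun ω ↦ (P[W|mG] ω)⁻¹ • P[fun ω ↦ W ω • G ω|mG] ω
  have hB₀m : StronglyMeasurable[mG] B₀ :=
    (stronglyMeasurable_condExp (f := W)).measurable.inv.stronglyMeasurable.smul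
      stronglyMeasurable_condExp
  have hWεB₀ := memLp_mul_smul_of_condExp_sq_le hHF hε (hvar.mono fun _ h ↦ h.2) hWm
    (ae_norm_le_of_mem_Icc hc₂.le hW_Icc) (hB₀m.mono hGH) <| memLp_inv_condExp_smul_condExp
      (hGH.trans hHF) hc₂ (hWm.mono hHF).aestronglyMeasurable hW_Icc hG2
  refine ⟨?_, B₀, hB₀m, hWεB₀, ?_, rfl⟩
  · rintro _ ⟨B, hBm, hWεB, -, rfl⟩
    exact integral_inner_mul_smul_sub_inv_condExp_smul_condExp_eq_zero hGH hHF hε hc₁ hvar hWm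
      hWκ hG hG2 hBm hWεB
  · exact integral_mul_smul_eq_zero_of_condExp_eq_zero hHF hWm (hB₀m.mono hGH)
      (hWεB₀.integrable one_le_two) (hε.integrable one_le_two) hεH

/-- equation (A4.4): the orthogonal projection of `G·W·ε` onto the
enlarged space `Λ̂⁽²⁾ = {B·W·ε : B 𝒢-measurable}` is `E[G·W | 𝒢]·T⁻¹·W·ε`:
the residual `(G − E[G·W | 𝒢]·T⁻¹)·W·ε` is orthogonal to `Λ̂⁽²⁾` and the candidate
lies in `Λ̂⁽²⁾`. -/
theorem projection_onto_enlarged_Lambda2hat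
    {Ω : Type*} {mΩ : MeasurableSpace Ω} (P : Measure Ω) [IsProbabilityMeasure P]
    {p : ℕ} {mG mH : MeasurableSpace Ω} (hGH : mG ≤ mH) (hHF : mH ≤ mΩ)
    (ε : Ω → ℝ) (hε : MemLp ε 2 P) (hεH : P[ε|mH] =ᵐ[P] 0)
    (c₁ c₂ : ℝ) (hc₁ : 0 < c₁)
    (hvar : ∀ᵐ ω ∂P, c₁ ≤ (P[fun ω => ε ω ^ 2|mH]) ω ∧ (P[fun ω => ε ω ^ 2|mH]) ω ≤ c₂)
    (W T : Ω → ℝ)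
    (hW : W = fun ω => ((P[fun ω => ε ω ^ 2|mH]) ω)⁻¹)
    (hT : T = P[W|mG])
    (Λ2h : Set (Ω → EuclideanSpace ℝ (Fin p)))
    (hΛ2h : Λ2h = {g | ∃ B : Ω → EuclideanSpace ℝ (Fin p),
      StronglyMeasurable[mG] B ∧ MemLp g 2 P ∧ (∫ ω, g ω ∂P) = 0 ∧
      g = fun ω => (W ω * ε ω) • B ω})
    (G : Ω → EuclideanSpace ℝ (Fin p)) (hG : StronglyMeasurable[mH] G)
    (hG2 : MemLp G 2 P)
    (hGWε : MemLp (fun ω => (W ω * ε ω) • G ω) 2 P) :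
    -- the residual is orthogonal to every element of Λ̂⁽²⁾
    (∀ h ∈ Λ2h,
      ∫ ω, ⟪(W ω * ε ω) • (G ω - (T ω)⁻¹ • (P[fun ω => W ω • G ω|mG]) ω), h ω⟫ ∂P
        = 0) ∧
    -- the candidate belongs to Λ̂⁽²⁾
    (fun ω => (W ω * ε ω) • ((T ω)⁻¹ • (P[fun ω => W ω • G ω|mG]) ω)) ∈ Λ2h :=
  projection_onto_enlarged_Lambda2hat_general P hGH hHF ε hε hεH c₁ c₂ hc₁ hvar W T hW hT Λ2h hΛ2h G
    hG hG2
end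

section
/- (Step 1 of Lemma S-A4.1.) Let B ∈ H and write Ḃ = B − E[B | ℋ] and R = E[B·ε | ℋ], assuming R·W·ε ∈ H. Then: (i) R·W·ε is orthogonal to every element of Λ⁽¹⁾; (ii) Ḃ − R·W·ε ∈ Λ⁽¹⁾, i.e., E[Ḃ − R·W·ε | ℋ] = 0 and E[(Ḃ − R·W·ε)·ε | ℋ] = 0 a.s. Consequently, the orthogonal projection of Ḃ onto the orthogonal complement of Λ⁽¹⁾ equals E[B·ε | ℋ]·W·ε. -/
/-!
Everything is the pull-out property of `E[· | ℋ]`: since `W` and `R` are `ℋ`-measurable,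
`E[W ε R | ℋ] = W R E[ε | ℋ] = 0` and `E[ε · W ε R | ℋ] = W E[ε² | ℋ] R = R`, while
`E[ε E[B | ℋ] | ℋ] = E[ε | ℋ] E[B | ℋ] = 0`; hence `E[ε (Ḃ − W ε R) | ℋ] = R − 0 − R = 0`.
Orthogonality is `E⟪W ε R, Γ⟫ = E⟪W R, E[ε Γ | ℋ]⟫ = 0`, and `Ḃ − W ε R` has mean zero because
its conditional expectation vanishes.
-/

open MeasureTheory
open scoped RealInnerProductSpace

namespace MeasureTheory

variable {Ω E : Type*} {m mΩ : MeasurableSpace Ω} {μ : Measure Ω}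
  [NormedAddCommGroup E] [InnerProductSpace ℝ E]

lemma MemLp.integrable_smul_of_two {c : Ω → ℝ} {f : Ω → E} (hc : MemLp c 2 μ)
    (hf : MemLp f 2 μ) : Integrable (fun ω => c ω • f ω) μ :=
  memLp_one_iff_integrable.1 (hf.smul hc)

lemma MemLp.integrable_inner_of_two {f g : Ω → E} (hf : MemLp f 2 μ) (hg : MemLp g 2 μ) :
    Integrable (fun ω => ⟪f ω, g ω⟫) μ :=
  memLp_one_iff_integrable.1 ((innerSL ℝ).memLp_of_bilin 1 hf hg)

variable [CompleteSpace E]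

lemma integral_eq_zero_of_condExp_eq_zero (hm : m ≤ mΩ) [SigmaFinite (μ.trim hm)]
    {f : Ω → E} (hf : μ[f|m] =ᵐ[μ] 0) : ∫ ω, f ω ∂μ = 0 := by
  rw [← integral_condExp hm, integral_congr_ae hf, Pi.zero_def, integral_zero]

lemma condExp_sub_condExp_sub_eq_zero (hm : m ≤ mΩ) [SigmaFinite (μ.trim hm)] {f g : Ω → E}
    (hf : Integrable f μ) (hg : Integrable g μ) (hg0 : μ[g|m] =ᵐ[μ] 0) :
    μ[fun ω => f ω - μ[f|m] ω - g ω|m] =ᵐ[μ] 0 := by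
  refine (condExp_sub (hf.sub integrable_condExp) hg m).trans ?_
  filter_upwards [condExp_sub hf integrable_condExp m, hg0] with ω hfω hgω
  rw [Pi.sub_apply, hfω, hgω, Pi.sub_apply,
    condExp_of_stronglyMeasurable hm stronglyMeasurable_condExp integrable_condExp]
  simp

lemma condExp_smul_eq_zero_of_condExp_eq_zero {c : Ω → ℝ} {g : Ω → E}
    (hg : StronglyMeasurable[m] g) (hc : Integrable c μ)
    (hcg : Integrable (fun ω => c ω • g ω) μ) (hc0 : μ[c|m] =ᵐ[μ] 0) :
    μ[fun ω => c ω • g ω|m] =ᵐ[μ] 0 := by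
  refine (condExp_smul_of_aestronglyMeasurable_right hc hcg hg.aestronglyMeasurable).trans ?_
  filter_upwards [hc0] with ω h0
  simp [h0]

lemma integral_inner_eq_zero_of_condExp_eq_zero (hm : m ≤ mΩ) [SigmaFinite (μ.trim hm)]
    {f g : Ω → E} (hg : StronglyMeasurable[m] g) (hf : Integrable f μ)
    (hgf : Integrable (fun ω => ⟪g ω, f ω⟫) μ) (hf0 : μ[f|m] =ᵐ[μ] 0) :
    ∫ ω, ⟪g ω, f ω⟫ ∂μ = 0 := by
  refine integral_eq_zero_of_condExp_eq_zero hm ?_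
  refine (condExp_bilin_of_aestronglyMeasurable_left (innerSL ℝ)
    hg.aestronglyMeasurable hgf hf).trans ?_
  filter_upwards [hf0] with ω h0
  simp [h0]

section WeightedResidual

variable {ε W : Ω → ℝ} {R : Ω → E}

lemma condExp_mul_smul_eq_zero (hW : StronglyMeasurable[m] W) (hR : StronglyMeasurable[m] R)
    (hε : Integrable ε μ) (hε0 : μ[ε|m] =ᵐ[μ] 0)
    (hWεR : Integrable (fun ω => (W ω * ε ω) • R ω) μ) :
    μ[fun ω => (W ω * ε ω) • R ω|m] =ᵐ[μ] 0 := by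
  simp_rw [mul_comm (W _), mul_smul] at hWεR ⊢
  exact condExp_smul_eq_zero_of_condExp_eq_zero (hW.smul hR) hε hWεR hε0

lemma condExp_smul_mul_smul_eq (hW : StronglyMeasurable[m] W) (hR : StronglyMeasurable[m] R)
    (hε : MemLp ε 2 μ) (hWεR : MemLp (fun ω => (W ω * ε ω) • R ω) 2 μ)
    (hWV : ∀ᵐ ω ∂μ, W ω * μ[fun ω => ε ω ^ 2|m] ω = 1) :
    μ[fun ω => ε ω • (W ω * ε ω) • R ω|m] =ᵐ[μ] R := by
  have hsq : ∀ ω, ε ω • (W ω * ε ω) • R ω = ε ω ^ 2 • W ω • R ω := fun ω => by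
    rw [mul_comm, mul_smul, smul_smul, sq]
  simp_rw [hsq]
  refine (condExp_smul_of_aestronglyMeasurable_right hε.integrable_sq
    ((hε.integrable_smul_of_two hWεR).congr (.of_forall hsq))
    (hW.smul hR).aestronglyMeasurable).trans ?_
  filter_upwards [hWV] with ω hω
  rw [Pi.smul_apply', smul_smul, mul_comm, hω, one_smul]

lemma integral_inner_mul_smul_eq_zero (hm : m ≤ mΩ) [SigmaFinite (μ.trim hm)]
    (hW : StronglyMeasurable[m] W) (hR : StronglyMeasurable[m] R) (hε : MemLp ε 2 μ)
    (hWεR : MemLp (fun ω => (W ω * ε ω) • R ω) 2 μ) {h : Ω → E} (hh : MemLp h 2 μ)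
    (hεh : μ[fun ω => ε ω • h ω|m] =ᵐ[μ] 0) :
    ∫ ω, ⟪(W ω * ε ω) • R ω, h ω⟫ ∂μ = 0 := by
  have hinner : ∀ ω, ⟪(W ω * ε ω) • R ω, h ω⟫ = ⟪W ω • R ω, ε ω • h ω⟫ := fun ω => by
    rw [mul_comm, mul_smul, real_inner_smul_left, real_inner_smul_right]
  simp_rw [hinner]
  exact integral_inner_eq_zero_of_condExp_eq_zero hm (hW.smul hR) (hε.integrable_smul_of_two hh)
    ((hWεR.integrable_inner_of_two hh).congr (.of_forall hinner)) hεh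

lemma condExp_smul_sub_condExp_sub_mul_smul_eq_zero [IsFiniteMeasure μ]
    (hW : StronglyMeasurable[m] W) (hR : StronglyMeasurable[m] R) (hε : MemLp ε 2 μ)
    (hε0 : μ[ε|m] =ᵐ[μ] 0) (hWεR : MemLp (fun ω => (W ω * ε ω) • R ω) 2 μ)
    (hWV : ∀ᵐ ω ∂μ, W ω * μ[fun ω => ε ω ^ 2|m] ω = 1) {B : Ω → E} (hB : MemLp B 2 μ)
    (hεB : μ[fun ω => ε ω • B ω|m] =ᵐ[μ] R) :
    μ[fun ω => ε ω • (B ω - μ[B|m] ω - (W ω * ε ω) • R ω)|m] =ᵐ[μ] 0 := by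
  simp_rw [smul_sub]
  have hεBi := hε.integrable_smul_of_two hB
  have hεcBi := hε.integrable_smul_of_two (hB.condExp (m := m) one_le_two)
  have hεcB : μ[fun ω => ε ω • μ[B|m] ω|m] =ᵐ[μ] 0 :=
    condExp_smul_eq_zero_of_condExp_eq_zero stronglyMeasurable_condExp
      (hε.integrable one_le_two) hεcBi hε0
  refine (condExp_sub (hεBi.sub hεcBi) (hε.integrable_smul_of_two hWεR) m).trans ?_
  filter_upwards [condExp_sub hεBi hεcBi m, hεB, hεcB, condExp_smul_mul_smul_eq hW hR hε hWεR hWV]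
    with ω h h₁ h₂ h₃
  rw [Pi.sub_apply, h, h₃, Pi.sub_apply, h₁, h₂]
  simp

end WeightedResidual

end MeasureTheory

theorem projection_of_Bdot_onto_Lambda1_perp_general
    {Ω : Type*} {mΩ : MeasurableSpace Ω} (P : Measure Ω) [IsProbabilityMeasure P]
    {p : ℕ} {mH : MeasurableSpace Ω} (hHF : mH ≤ mΩ)
    (ε : Ω → ℝ) (hε : MemLp ε 2 P) (hεH : P[ε|mH] =ᵐ[P] 0)
    (c₁ c₂ : ℝ) (hc₁ : 0 < c₁)
    (hvar : ∀ᵐ ω ∂P, c₁ ≤ (P[fun ω => ε ω ^ 2|mH]) ω ∧ (P[fun ω => ε ω ^ 2|mH]) ω ≤ c₂)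
    (W : Ω → ℝ) (hW : W = fun ω => ((P[fun ω => ε ω ^ 2|mH]) ω)⁻¹)
    (Λ1 : Set (Ω → EuclideanSpace ℝ (Fin p)))
    (hΛ1 : Λ1 = {Γ | MemLp Γ 2 P ∧ (∫ ω, Γ ω ∂P) = 0 ∧
      P[Γ|mH] =ᵐ[P] 0 ∧ P[fun ω => ε ω • Γ ω|mH] =ᵐ[P] 0})
    (B : Ω → EuclideanSpace ℝ (Fin p)) (hB : MemLp B 2 P)
    (Bdot R : Ω → EuclideanSpace ℝ (Fin p))
    (hBdot : Bdot = fun ω => B ω - (P[B|mH]) ω)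
    (hR : R = P[fun ω => ε ω • B ω|mH])
    (hRWε : MemLp (fun ω => (W ω * ε ω) • R ω) 2 P) :
    -- (i) R·W·ε ⟂ Λ⁽¹⁾
    (∀ h ∈ Λ1, ∫ ω, ⟪(W ω * ε ω) • R ω, h ω⟫ ∂P = 0) ∧
    -- (ii) Ḃ − R·W·ε ∈ Λ⁽¹⁾
    (fun ω => Bdot ω - (W ω * ε ω) • R ω) ∈ Λ1 := by
  subst hBdot hΛ1
  have hWm : StronglyMeasurable[mH] W :=
    hW ▸ stronglyMeasurable_condExp.measurable.inv.stronglyMeasurable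
  have hRm : StronglyMeasurable[mH] R := hR ▸ stronglyMeasurable_condExp
  have hWV : ∀ᵐ ω ∂P, W ω * P[fun ω => ε ω ^ 2|mH] ω = 1 := by
    filter_upwards [hvar] with ω hω
    rw [hW]
    exact inv_mul_cancel₀ (by linarith [hω.1])
  have hcond : P[fun ω => B ω - P[B|mH] ω - (W ω * ε ω) • R ω|mH] =ᵐ[P] 0 :=
    condExp_sub_condExp_sub_eq_zero hHF (hB.integrable one_le_two)
      (hRWε.integrable one_le_two) (condExp_mul_smul_eq_zero hWm hRm
        (hε.integrable one_le_two) hεH (hRWε.integrable one_le_two))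
  exact ⟨fun h ⟨hh, _, _, hεh⟩ => integral_inner_mul_smul_eq_zero hHF hWm hRm hε hRWε hh hεh,
    (hB.sub (hB.condExp one_le_two)).sub hRWε, integral_eq_zero_of_condExp_eq_zero hHF hcond,
    hcond, condExp_smul_sub_condExp_sub_mul_smul_eq_zero hWm hRm hε hεH hRWε hWV hB
      hR.symm.eventuallyEq⟩

/-- Step 1 of Lemma S-A4.1: for `B ∈ H`, writing
`Ḃ = B − E[B | ℋ]` and `R = E[B·ε | ℋ]`, (i) `R·W·ε` is orthogonal to every element of
`Λ⁽¹⁾`, and (ii) `Ḃ − R·W·ε ∈ Λ⁽¹⁾`; hence the projection of `Ḃ` onto `Λ⁽¹⁾^⊥` is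
`E[B·ε | ℋ]·W·ε`. -/
theorem projection_of_Bdot_onto_Lambda1_perp
    {Ω : Type*} {mΩ : MeasurableSpace Ω} (P : Measure Ω) [IsProbabilityMeasure P]
    {p : ℕ} {mG mH : MeasurableSpace Ω} (hGH : mG ≤ mH) (hHF : mH ≤ mΩ)
    (ε : Ω → ℝ) (hε : MemLp ε 2 P) (hεH : P[ε|mH] =ᵐ[P] 0)
    (c₁ c₂ : ℝ) (hc₁ : 0 < c₁)
    (hvar : ∀ᵐ ω ∂P, c₁ ≤ (P[fun ω => ε ω ^ 2|mH]) ω ∧ (P[fun ω => ε ω ^ 2|mH]) ω ≤ c₂)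
    (W : Ω → ℝ) (hW : W = fun ω => ((P[fun ω => ε ω ^ 2|mH]) ω)⁻¹)
    (Λ1 : Set (Ω → EuclideanSpace ℝ (Fin p)))
    (hΛ1 : Λ1 = {Γ | MemLp Γ 2 P ∧ (∫ ω, Γ ω ∂P) = 0 ∧
      P[Γ|mH] =ᵐ[P] 0 ∧ P[fun ω => ε ω • Γ ω|mH] =ᵐ[P] 0})
    (B : Ω → EuclideanSpace ℝ (Fin p)) (hB : MemLp B 2 P) (hB0 : (∫ ω, B ω ∂P) = 0)
    (Bdot R : Ω → EuclideanSpace ℝ (Fin p))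
    (hBdot : Bdot = fun ω => B ω - (P[B|mH]) ω)
    (hR : R = P[fun ω => ε ω • B ω|mH])
    (hRWε : MemLp (fun ω => (W ω * ε ω) • R ω) 2 P) :
    -- (i) R·W·ε ⟂ Λ⁽¹⁾
    (∀ h ∈ Λ1, ∫ ω, ⟪(W ω * ε ω) • R ω, h ω⟫ ∂P = 0) ∧
    -- (ii) Ḃ − R·W·ε ∈ Λ⁽¹⁾
    (fun ω => Bdot ω - (W ω * ε ω) • R ω) ∈ Λ1 :=
  projection_of_Bdot_onto_Lambda1_perp_general P hHF ε hε hεH c₁ c₂ hc₁ hvar W hW Λ1 hΛ1 B hB Bdot R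
    hBdot hR hRWε
end

section
/- (Second-order bias of the plug-in efficient score: the core of rate double robustness in Theorem 2.) Assume the conditional moment restriction: τ, λ, μ are 𝒢-measurable with E[Y − τ·A − (1−S)·λ·(A − e) | ℋ] = μ a.s., |λ| ≤ C_λ a.s., and Y ∈ L²(P). Let the estimated nuisances be: ê 𝒢-measurable with δ ≤ ê ≤ 1−δ a.s. for some δ > 0; μ̂ 𝒢-measurable with μ̂ − μ ∈ L²(P); σ̂₁², σ̂₀² 𝒢-measurable with c₁ ≤ σ̂ₐ² ≤ c₂ a.s. for constants 0 < c₁ ≤ c₂ (a = 0,1); and D a 𝒢-measurable ℝ^p-valued random variable with ‖D‖ ≤ C_D a.s. Define Ŵ = A/σ̂₁² + (1−A)/σ̂₀², T̂ = ê/σ̂₁² + (1−ê)/σ̂₀², ε̂ = Y − τ·A − (1−S)·λ·(A − ê) − μ̂, and the plug-in score Ŝ = D·(A − (ê/σ̂₁²)·T̂⁻¹)·Ŵ·ε̂. Then the exact identity holds: E[Ŝ] = E[ D · (σ̂₁²·σ̂₀²·T̂)⁻¹ · (e − ê) · { (μ − μ̂) − (1−S)·λ·(e − ê) } ], and consequently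 ‖E[Ŝ]‖ ≤ C·( ‖ê − e‖_{L²(P)}·‖μ̂ − μ‖_{L²(P)} + ‖ê − e‖²_{L²(P)} ) for a constant C depending only on (δ, c₁, c₂, C_D, C_λ). -/
/-!
The plug-in weight factors as `(A - ê) / (σ̂₁² σ̂₀² T̂)`, and the plug-in residual splits as
`ε̂ = R + h`, where `R = Y - τ A - (1 - S) λ (A - e) - μ` is centred given `ℋ` and
`h = (μ - μ̂) - (1 - S) λ (e - ê)` is `𝒢`-measurable. Writing `A - ê = (A - e) + (e - ê)`,
the mean of the `R`-term vanishes by the tower property over `ℋ` and that of the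
`(A - e) h`-term over `𝒢`, which leaves the mean of `(e - ê) h`. Cauchy–Schwarz bounds it by
products of `L²` errors.
-/

open MeasureTheory
open scoped ENNReal

theorem mul_mul_div_add_div {x s₁ s₀ : ℝ} (hs₁ : s₁ ≠ 0) (hs₀ : s₀ ≠ 0) :
    s₁ * s₀ * (x / s₁ + (1 - x) / s₀) = x * s₀ + (1 - x) * s₁ := by
  field_simp

theorem le_mul_mul_div_add_div {c x s₁ s₀ : ℝ} (hc : 0 < c) (h₁ : c ≤ s₁) (h₀ : c ≤ s₀)
    (hx₀ : 0 ≤ x) (hx₁ : x ≤ 1) : c ≤ s₁ * s₀ * (x / s₁ + (1 - x) / s₀) := by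
  rw [mul_mul_div_add_div (by linarith) (by linarith)]
  nlinarith

theorem abs_inv_mul_mul_div_add_div_le {c x s₁ s₀ : ℝ} (hc : 0 < c) (h₁ : c ≤ s₁)
    (h₀ : c ≤ s₀) (hx₀ : 0 ≤ x) (hx₁ : x ≤ 1) :
    |(s₁ * s₀ * (x / s₁ + (1 - x) / s₀))⁻¹| ≤ c⁻¹ := by
  have hT := le_mul_mul_div_add_div hc h₁ h₀ hx₀ hx₁
  rw [abs_of_pos (inv_pos.2 (hc.trans_le hT))]
  exact inv_anti₀ hc hT

theorem sub_div_mul_inv_mul_div_add_div {a x s₁ s₀ : ℝ} (ha : a = 0 ∨ a = 1) (hs₁ : 0 < s₁)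
    (hs₀ : 0 < s₀) (hx₀ : 0 ≤ x) (hx₁ : x ≤ 1) :
    (a - x / s₁ * (x / s₁ + (1 - x) / s₀)⁻¹) * (a / s₁ + (1 - a) / s₀) =
      (a - x) * (s₁ * s₀ * (x / s₁ + (1 - x) / s₀))⁻¹ := by
  have hrel := mul_mul_div_add_div (x := x) hs₁.ne' hs₀.ne'
  have hm : 0 < min s₁ s₀ := lt_min hs₁ hs₀
  have hT : x / s₁ + (1 - x) / s₀ ≠ 0 := right_ne_zero_of_mul (hm.trans_le
    (le_mul_mul_div_add_div hm (min_le_left _ _) (min_le_right _ _) hx₀ hx₁)).ne'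
  generalize x / s₁ + (1 - x) / s₀ = T at hT hrel ⊢
  rcases ha with rfl | rfl
  · field_simp
    ring
  · field_simp
    linear_combination hrel

theorem norm_mul_mul_sub_smul_le {E : Type*} [SeminormedAddCommGroup E] [NormedSpace ℝ E]
    {k u v s l c₁ c₂ C CD : ℝ} {d : E} (hc₁ : 0 < c₁) (hc₁₂ : c₁ ≤ c₂) (hk : |k| ≤ c₁⁻¹)
    (hs : |s| ≤ 1) (hl : |l| ≤ C) (hd : ‖d‖ ≤ CD) :
    ‖(k * u * (v - s * l * u)) • d‖ ≤ CD * c₂ / c₁ ^ 2 * max 1 C * (|u| * |v| + |u| ^ 2) := by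
  have hk' : |k| ≤ c₂ / c₁ ^ 2 :=
    hk.trans (by rw [inv_eq_one_div, div_le_div_iff₀ hc₁ (by positivity)]; nlinarith)
  have hv : |v - s * l * u| ≤ max 1 C * (|v| + |u|) := calc
    |v - s * l * u| ≤ |v| + |s| * |l| * |u| := by rw [← abs_mul, ← abs_mul]; exact abs_sub _ _
    _ ≤ |v| + 1 * C * |u| := by gcongr
    _ ≤ max 1 C * (|v| + |u|) := by
        nlinarith [le_max_left 1 C, le_max_right 1 C, abs_nonneg u, abs_nonneg v]
  have hc₂ : 0 ≤ c₂ := hc₁.le.trans hc₁₂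
  rw [norm_smul, Real.norm_eq_abs, abs_mul, abs_mul]
  calc |k| * |u| * |v - s * l * u| * ‖d‖
      ≤ c₂ / c₁ ^ 2 * |u| * (max 1 C * (|v| + |u|)) * CD := by gcongr
    _ = CD * c₂ / c₁ ^ 2 * max 1 C * (|u| * |v| + |u| ^ 2) := by ring

section Integrals

variable {Ω E : Type*} {mΩ : MeasurableSpace Ω} {P : Measure Ω}
  [NormedAddCommGroup E] [NormedSpace ℝ E]

theorem condExp_sub_ae_eq_zero [IsFiniteMeasure P] {m : MeasurableSpace Ω} (hm : m ≤ mΩ)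
    {f g : Ω → ℝ} (hf : Integrable f P) (hg : StronglyMeasurable[m] g) (hfg : P[f|m] =ᵐ[P] g) :
    P[f - g|m] =ᵐ[P] 0 := by
  have hg_int : Integrable g P := integrable_condExp.congr hfg
  filter_upwards [condExp_sub hf hg_int m, hfg] with ω h h'
  simp [h, h', condExp_of_stronglyMeasurable hm hg hg_int]

theorem integral_norm_mul_norm_le_eLpNorm_two {F : Type*} [NormedAddCommGroup F] {f g : Ω → F}
    (hf : MemLp f 2 P) (hg : MemLp g 2 P) :
    ∫ ω, ‖f ω‖ * ‖g ω‖ ∂P ≤ (eLpNorm f 2 P).toReal * (eLpNorm g 2 P).toReal := by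
  have := integral_mul_norm_le_Lp_mul_Lq (p := 2) (q := 2) Real.HolderConjugate.two_two
    (by simpa using hf) (by simpa using hg)
  rw [hf.eLpNorm_eq_integral_rpow_norm two_ne_zero ENNReal.ofNat_ne_top,
    hg.eLpNorm_eq_integral_rpow_norm two_ne_zero ENNReal.ofNat_ne_top,
    ENNReal.toReal_ofReal (by positivity), ENNReal.toReal_ofReal (by positivity)]
  simpa using this

theorem norm_integral_le_of_norm_le_mul_add_sq {F : Type*} [NormedAddCommGroup F]
    {f g : Ω → F} {Φ : Ω → E} {M : ℝ} (hM : 0 ≤ M) (hf : MemLp f 2 P) (hg : MemLp g 2 P)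
    (hΦ : ∀ᵐ ω ∂P, ‖Φ ω‖ ≤ M * (‖f ω‖ * ‖g ω‖ + ‖f ω‖ ^ 2)) :
    ‖∫ ω, Φ ω ∂P‖ ≤ M * ((eLpNorm f 2 P).toReal * (eLpNorm g 2 P).toReal +
      (eLpNorm f 2 P).toReal ^ 2) := by
  have hfg : Integrable (fun ω => ‖f ω‖ * ‖g ω‖) P := hf.norm.integrable_mul hg.norm
  have hff : Integrable (fun ω => ‖f ω‖ * ‖f ω‖) P := hf.norm.integrable_mul hf.norm
  calc ‖∫ ω, Φ ω ∂P‖ ≤ ∫ ω, M * (‖f ω‖ * ‖g ω‖ + ‖f ω‖ * ‖f ω‖) ∂P :=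
        norm_integral_le_of_norm_le ((hfg.add hff).const_mul M) (by simpa [sq] using hΦ)
    _ = M * (∫ ω, ‖f ω‖ * ‖g ω‖ ∂P + ∫ ω, ‖f ω‖ * ‖f ω‖ ∂P) := by
        rw [integral_const_mul, integral_add hfg hff]
    _ ≤ _ := by
        rw [sq]
        gcongr
        · exact integral_norm_mul_norm_le_eLpNorm_two hf hg
        · exact integral_norm_mul_norm_le_eLpNorm_two hf hf

variable [CompleteSpace E]

theorem integral_smul_eq_zero_of_condExp_eq_zero [IsFiniteMeasure P] {m : MeasurableSpace Ω}
    (hm : m ≤ mΩ) {g : Ω → ℝ} {F : Ω → E} (hg : Integrable g P)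
    (hF : AEStronglyMeasurable[m] F P) (hgF : Integrable (g • F) P) (hg₀ : P[g|m] =ᵐ[P] 0) :
    ∫ ω, g ω • F ω ∂P = 0 := by
  change ∫ ω, (g • F) ω ∂P = 0
  rw [← integral_condExp hm]
  refine integral_eq_zero_of_ae ?_
  filter_upwards [condExp_smul_of_aestronglyMeasurable_right hg hgF hF, hg₀] with ω h h₀
  simp [h, h₀]

theorem integral_sub_mul_add_smul_eq_condExp [IsFiniteMeasure P] {mG mH : MeasurableSpace Ω}
    (hGH : mG ≤ mH) (hHΩ : mH ≤ mΩ) {A x R h : Ω → ℝ} {F : Ω → E}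
    (hA : StronglyMeasurable[mH] A) (hA_top : MemLp A ∞ P)
    (hx : StronglyMeasurable[mG] x) (hx_top : MemLp x ∞ P)
    (hR : Integrable R P) (hR₀ : P[R|mH] =ᵐ[P] 0)
    (hh : StronglyMeasurable[mG] h) (hh_int : Integrable h P)
    (hF : StronglyMeasurable[mG] F) (hF_top : MemLp F ∞ P) :
    ∫ ω, ((A ω - x ω) * (R ω + h ω)) • F ω ∂P =
      ∫ ω, ((P[A|mG] ω - x ω) * h ω) • F ω ∂P := by
  set e := P[A|mG]
  have hGΩ := hGH.trans hHΩ
  have he_top : MemLp e ∞ P := hA_top.condExp le_top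
  have hI₁ : Integrable (fun ω => R ω • ((A ω - x ω) • F ω)) P :=
    hR.smul_of_top_left (hF_top.smul (hA_top.sub hx_top))
  have hI₂ : Integrable (fun ω => (A ω - e ω) • (h ω • F ω)) P :=
    (hh_int.smul_of_top_left hF_top).smul_of_top_right (hA_top.sub he_top)
  have hI₃ : Integrable (fun ω => ((e ω - x ω) * h ω) • F ω) P :=
    (hh_int.mul_of_top_right (he_top.sub hx_top)).smul_of_top_left hF_top
  have h₁ : ∫ ω, R ω • ((A ω - x ω) • F ω) ∂P = 0 :=
    integral_smul_eq_zero_of_condExp_eq_zero hHΩ hR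
      ((hA.sub (hx.mono hGH)).smul (hF.mono hGH)).aestronglyMeasurable hI₁ hR₀
  have h₂ : ∫ ω, (A ω - e ω) • (h ω • F ω) ∂P = 0 :=
    integral_smul_eq_zero_of_condExp_eq_zero hGΩ ((hA_top.sub he_top).integrable le_top)
      (hh.smul hF).aestronglyMeasurable hI₂
      (condExp_sub_ae_eq_zero hGΩ (hA_top.integrable le_top) stronglyMeasurable_condExp
        Filter.EventuallyEq.rfl)
  calc ∫ ω, ((A ω - x ω) * (R ω + h ω)) • F ω ∂P
      = ∫ ω, R ω • ((A ω - x ω) • F ω) + (A ω - e ω) • (h ω • F ω) +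
          ((e ω - x ω) * h ω) • F ω ∂P := by
        congr 1; ext ω
        simp only [smul_smul, ← add_smul]
        congr 1; ring
    _ = ∫ ω, ((e ω - x ω) * h ω) • F ω ∂P := by
        rw [integral_add (hI₁.fun_add hI₂) hI₃, integral_add hI₁ hI₂, h₁, h₂, zero_add, zero_add]

end Integrals

theorem second_order_bias_of_plug_in_efficient_score_general
    {Ω : Type*} {mΩ : MeasurableSpace Ω} (P : Measure Ω) [IsProbabilityMeasure P]
    {p : ℕ} {mG mH : MeasurableSpace Ω} (hGH : mG ≤ mH) (hHF : mH ≤ mΩ)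
    (A S Y : Ω → ℝ)
    (hA : StronglyMeasurable[mH] A) (hA01 : ∀ ω, A ω = 0 ∨ A ω = 1)
    (hS : StronglyMeasurable[mG] S) (hS01 : ∀ ω, S ω = 0 ∨ S ω = 1)
    (e : Ω → ℝ) (he : e = P[A|mG])
    -- true structural functions and the conditional moment restriction
    (τ lam μ : Ω → ℝ)
    (hlam : StronglyMeasurable[mG] lam)
    (hμ : StronglyMeasurable[mG] μ)
    (Clam : ℝ) (hlamb : ∀ᵐ ω ∂P, |lam ω| ≤ Clam)
    (hres : Integrable (fun ω => Y ω - τ ω * A ω - (1 - S ω) * lam ω * (A ω - e ω)) P)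
    (hmom : P[fun ω => Y ω - τ ω * A ω - (1 - S ω) * lam ω * (A ω - e ω)|mH] =ᵐ[P] μ)
    -- estimated nuisance functions
    (ehat muhat s1sq s0sq : Ω → ℝ)
    (hehatmeas : StronglyMeasurable[mG] ehat) (hmuhatmeas : StronglyMeasurable[mG] muhat)
    (hs1meas : StronglyMeasurable[mG] s1sq) (hs0meas : StronglyMeasurable[mG] s0sq)
    (δ : ℝ) (hδ : 0 < δ) (hehatb : ∀ ω, δ ≤ ehat ω ∧ ehat ω ≤ 1 - δ)
    (hmuhat : MemLp (fun ω => muhat ω - μ ω) 2 P)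
    (c₁ c₂ : ℝ) (hc₁ : 0 < c₁)
    (hs1b : ∀ ω, c₁ ≤ s1sq ω ∧ s1sq ω ≤ c₂) (hs0b : ∀ ω, c₁ ≤ s0sq ω ∧ s0sq ω ≤ c₂)
    (D : Ω → EuclideanSpace ℝ (Fin p)) (hD : StronglyMeasurable[mG] D)
    (CD : ℝ) (hDb : ∀ ω, ‖D ω‖ ≤ CD)
    -- plug-in quantities
    (What That εhat : Ω → ℝ) (Shat : Ω → EuclideanSpace ℝ (Fin p))
    (hWhat : What = fun ω => A ω / s1sq ω + (1 - A ω) / s0sq ω)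
    (hThat : That = fun ω => ehat ω / s1sq ω + (1 - ehat ω) / s0sq ω)
    (hεhat : εhat = fun ω =>
      Y ω - τ ω * A ω - (1 - S ω) * lam ω * (A ω - ehat ω) - muhat ω)
    (hShat : Shat = fun ω =>
      ((A ω - (ehat ω / s1sq ω) * (That ω)⁻¹) * What ω * εhat ω) • D ω) :
    -- exact second-order bias identity
    (∫ ω, Shat ω ∂P) =
      ∫ ω, ((s1sq ω * s0sq ω * That ω)⁻¹ * (e ω - ehat ω) *
        ((μ ω - muhat ω) - (1 - S ω) * lam ω * (e ω - ehat ω))) • D ω ∂P ∧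
    -- second-order bound with explicit constant depending only on (δ, c₁, c₂, C_D, C_λ)
    ‖∫ ω, Shat ω ∂P‖ ≤ (CD * c₂ / c₁ ^ 2 * max 1 Clam) *
      ((eLpNorm (fun ω => ehat ω - e ω) 2 P).toReal *
          (eLpNorm (fun ω => muhat ω - μ ω) 2 P).toReal +
        (eLpNorm (fun ω => ehat ω - e ω) 2 P).toReal ^ 2) := by
  obtain ⟨ω₀⟩ := nonempty_of_isProbabilityMeasure P
  subst he
  have hGΩ : mG ≤ mΩ := hGH.trans hHF
  have hc₁₂ : c₁ ≤ c₂ := (hs1b ω₀).1.trans (hs1b ω₀).2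
  have hehat₀ (ω : Ω) : 0 ≤ ehat ω := by linarith [hehatb ω]
  have hehat₁ (ω : Ω) : ehat ω ≤ 1 := by linarith [hehatb ω]
  have hS_abs (ω : Ω) : |1 - S ω| ≤ 1 := by rcases hS01 ω with h | h <;> simp [h]
  set K : Ω → ℝ := fun ω => (s1sq ω * s0sq ω * That ω)⁻¹ with hK_def
  set R : Ω → ℝ := fun ω =>
    Y ω - τ ω * A ω - (1 - S ω) * lam ω * (A ω - P[A|mG] ω) - μ ω
  set h : Ω → ℝ := fun ω =>
    μ ω - muhat ω - (1 - S ω) * lam ω * (P[A|mG] ω - ehat ω)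
  have hK (ω : Ω) : |K ω| ≤ c₁⁻¹ := by
    simpa only [K, hThat] using
      abs_inv_mul_mul_div_add_div_le hc₁ (hs1b ω).1 (hs0b ω).1 (hehat₀ ω) (hehat₁ ω)
  have hShat_eq (ω : Ω) : Shat ω = ((A ω - ehat ω) * (R ω + h ω)) • (K ω • D ω) := by
    simp only [hShat, hWhat, hεhat, hThat, K, smul_smul]
    rw [sub_div_mul_inv_mul_div_add_div (hA01 ω) (hc₁.trans_le (hs1b ω).1)
      (hc₁.trans_le (hs0b ω).1) (hehat₀ ω) (hehat₁ ω)]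
    exact congrArg (· • D ω) (by ring)
  have hKm : StronglyMeasurable[mG] K := by
    rw [hK_def, hThat]
    fun_prop
  have hA_top : MemLp A ∞ P := memLp_top_of_bound (hA.mono hHF).aestronglyMeasurable 1
    (ae_of_all _ fun ω => by rcases hA01 ω with h | h <;> simp [h])
  have hehat_top : MemLp ehat ∞ P :=
    memLp_top_of_bound (hehatmeas.mono hGΩ).aestronglyMeasurable 1
      (ae_of_all _ fun ω => abs_le.2 ⟨by linarith [hehat₀ ω], hehat₁ ω⟩)
  have he_top : MemLp P[A|mG] ∞ P := hA_top.condExp le_top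
  have hKD_top : MemLp (fun ω => K ω • D ω) ∞ P :=
    memLp_top_of_bound ((hKm.smul hD).mono hGΩ).aestronglyMeasurable (c₁⁻¹ * CD)
      (ae_of_all _ fun ω => by
        rw [norm_smul, Real.norm_eq_abs]
        exact mul_le_mul (hK ω) (hDb ω) (norm_nonneg _) (inv_nonneg.2 hc₁.le))
  have hh_int : Integrable h P := by
    have hS_top : MemLp (fun ω => 1 - S ω) ∞ P :=
      memLp_top_of_bound ((stronglyMeasurable_const.sub hS).mono hGΩ).aestronglyMeasurable 1
        (ae_of_all _ hS_abs)
    have hlam_top : MemLp lam ∞ P :=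
      memLp_top_of_bound (hlam.mono hGΩ).aestronglyMeasurable Clam hlamb
    have hbias_top : MemLp (fun ω => (1 - S ω) * lam ω * (P[A|mG] ω - ehat ω)) ∞ P :=
      (he_top.sub hehat_top).mul' (r := ∞) (hlam_top.mul' (r := ∞) hS_top)
    exact ((hmuhat.integrable one_le_two).neg.congr (ae_of_all _ fun ω => neg_sub _ _)).sub
      (hbias_top.integrable le_top)
  have hμ_int : Integrable μ P := integrable_condExp.congr hmom
  have hid : ∫ ω, Shat ω ∂P = ∫ ω, (K ω * (P[A|mG] ω - ehat ω) * h ω) • D ω ∂P := calc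
    ∫ ω, Shat ω ∂P = ∫ ω, ((A ω - ehat ω) * (R ω + h ω)) • (K ω • D ω) ∂P :=
        integral_congr_ae (ae_of_all _ hShat_eq)
    _ = ∫ ω, ((P[A|mG] ω - ehat ω) * h ω) • (K ω • D ω) ∂P :=
        integral_sub_mul_add_smul_eq_condExp hGH hHF hA hA_top hehatmeas hehat_top
          (hres.sub hμ_int) (condExp_sub_ae_eq_zero hHF hres (hμ.mono hGH) hmom) (by fun_prop)
          hh_int (hKm.smul hD) hKD_top
    _ = ∫ ω, (K ω * (P[A|mG] ω - ehat ω) * h ω) • D ω ∂P := by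
        congr 1; funext ω
        rw [smul_smul]
        exact congrArg (· • D ω) (by ring)
  have hM : 0 ≤ CD * c₂ / c₁ ^ 2 * max 1 Clam := by
    have hCD : 0 ≤ CD := (norm_nonneg _).trans (hDb ω₀)
    have hc₂ : 0 ≤ c₂ := hc₁.le.trans hc₁₂
    have : 0 ≤ max 1 Clam := zero_le_one.trans (le_max_left 1 Clam)
    positivity
  refine ⟨hid, hid ▸ norm_integral_le_of_norm_le_mul_add_sq hM
    ((hehat_top.sub he_top).mono_exponent le_top) hmuhat ?_⟩
  filter_upwards [hlamb] with ω hl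
  rw [Real.norm_eq_abs, Real.norm_eq_abs, abs_sub_comm (ehat ω), abs_sub_comm (muhat ω)]
  exact norm_mul_mul_sub_smul_le hc₁ hc₁₂ (hK ω) (hS_abs ω) hl (hDb ω)

/-- second-order bias of the plug-in efficient score; core of the
rate double robustness in Theorem 2: the mean of the efficient score evaluated at the
true structural parameters but estimated nuisance functions satisfies an exact
product-bias identity, and hence is bounded by a second-order term in the nuisance
estimation errors, with a constant depending only on `(δ, c₁, c₂, C_D, C_λ)`. -/
theorem second_order_bias_of_plug_in_efficient_score
    {Ω : Type*} {mΩ : MeasurableSpace Ω} (P : Measure Ω) [IsProbabilityMeasure P]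
    {p : ℕ} {mG mH : MeasurableSpace Ω} (hGH : mG ≤ mH) (hHF : mH ≤ mΩ)
    (A S Y : Ω → ℝ)
    (hA : StronglyMeasurable[mH] A) (hA01 : ∀ ω, A ω = 0 ∨ A ω = 1)
    (hS : StronglyMeasurable[mG] S) (hS01 : ∀ ω, S ω = 0 ∨ S ω = 1)
    (hY2 : MemLp Y 2 P)
    (e : Ω → ℝ) (he : e = P[A|mG]) (he01 : ∀ᵐ ω ∂P, 0 < e ω ∧ e ω < 1)
    -- true structural functions and the conditional moment restriction
    (τ lam μ : Ω → ℝ)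
    (hτ : StronglyMeasurable[mG] τ) (hlam : StronglyMeasurable[mG] lam)
    (hμ : StronglyMeasurable[mG] μ)
    (Clam : ℝ) (hlamb : ∀ᵐ ω ∂P, |lam ω| ≤ Clam)
    (hres : Integrable (fun ω => Y ω - τ ω * A ω - (1 - S ω) * lam ω * (A ω - e ω)) P)
    (hmom : P[fun ω => Y ω - τ ω * A ω - (1 - S ω) * lam ω * (A ω - e ω)|mH] =ᵐ[P] μ)
    -- estimated nuisance functions
    (ehat muhat s1sq s0sq : Ω → ℝ)
    (hehatmeas : StronglyMeasurable[mG] ehat) (hmuhatmeas : StronglyMeasurable[mG] muhat)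
    (hs1meas : StronglyMeasurable[mG] s1sq) (hs0meas : StronglyMeasurable[mG] s0sq)
    (δ : ℝ) (hδ : 0 < δ) (hehatb : ∀ ω, δ ≤ ehat ω ∧ ehat ω ≤ 1 - δ)
    (hmuhat : MemLp (fun ω => muhat ω - μ ω) 2 P)
    (c₁ c₂ : ℝ) (hc₁ : 0 < c₁)
    (hs1b : ∀ ω, c₁ ≤ s1sq ω ∧ s1sq ω ≤ c₂) (hs0b : ∀ ω, c₁ ≤ s0sq ω ∧ s0sq ω ≤ c₂)
    (D : Ω → EuclideanSpace ℝ (Fin p)) (hD : StronglyMeasurable[mG] D)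
    (CD : ℝ) (hDb : ∀ ω, ‖D ω‖ ≤ CD)
    -- plug-in quantities
    (What That εhat : Ω → ℝ) (Shat : Ω → EuclideanSpace ℝ (Fin p))
    (hWhat : What = fun ω => A ω / s1sq ω + (1 - A ω) / s0sq ω)
    (hThat : That = fun ω => ehat ω / s1sq ω + (1 - ehat ω) / s0sq ω)
    (hεhat : εhat = fun ω =>
      Y ω - τ ω * A ω - (1 - S ω) * lam ω * (A ω - ehat ω) - muhat ω)
    (hShat : Shat = fun ω =>
      ((A ω - (ehat ω / s1sq ω) * (That ω)⁻¹) * What ω * εhat ω) • D ω) :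
    -- exact second-order bias identity
    (∫ ω, Shat ω ∂P) =
      ∫ ω, ((s1sq ω * s0sq ω * That ω)⁻¹ * (e ω - ehat ω) *
        ((μ ω - muhat ω) - (1 - S ω) * lam ω * (e ω - ehat ω))) • D ω ∂P ∧
    -- second-order bound with explicit constant depending only on (δ, c₁, c₂, C_D, C_λ)
    ‖∫ ω, Shat ω ∂P‖ ≤ (CD * c₂ / c₁ ^ 2 * max 1 Clam) *
      ((eLpNorm (fun ω => ehat ω - e ω) 2 P).toReal *
          (eLpNorm (fun ω => muhat ω - μ ω) 2 P).toReal +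
        (eLpNorm (fun ω => ehat ω - e ω) 2 P).toReal ^ 2) :=
  second_order_bias_of_plug_in_efficient_score_general P hGH hHF A S Y hA hA01 hS hS01 e he τ lam μ
    hlam hμ Clam hlamb hres hmom ehat muhat s1sq s0sq hehatmeas hmuhatmeas hs1meas hs0meas δ hδ
    hehatb hmuhat c₁ c₂ hc₁ hs1b hs0b D hD CD hDb What That εhat Shat hWhat hThat hεhat hShat
end
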